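/- arXiv:1606.09303 — 6 statements merged into one kernel-verified Lean document; each statement's English description precedes it below -/
import Mathlib

section
/- If M ≥ 2N and f : [N] → ℂ is extended by zero to Z/MZ, then the ratio ‖f‖_{U²(Z/MZ)} / ‖1_{[N]}‖_{U²(Z/MZ)} is independent of the choice of M ≥ 2N. -/
open Finset Complex

/-- The fourth power of the Gowers `U²(ℤ/Mℤ)` norm. -/
noncomputable def U2p4 (M : ℕ) [NeZero M] (f : ZMod M → ℂ) : ℂ :=
  (1 / (M : ℂ) ^ 3) * ∑ a : ZMod M, ∑ h₁ : ZMod M, ∑ h₂ : ZMod M,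
    f a * (starRingEnd ℂ) (f (a + h₁)) * (starRingEnd ℂ) (f (a + h₂)) * f (a + h₁ + h₂)

/-- The `U²(ℤ/Mℤ)` norm, defined as the fourth root of the (real, nonnegative)
Gowers expression. -/
noncomputable def u2norm (M : ℕ) [NeZero M] (f : ZMod M → ℂ) : ℝ :=
  (U2p4 M f).re ^ ((1 : ℝ) / 4)

/-- Extend a function on `[N] = {1,…,N}` by zero to `ℤ/Mℤ`. -/
def extendZ (N M : ℕ) (f : ℕ → ℂ) : ZMod M → ℂ :=
  fun x => if 1 ≤ x.val ∧ x.val ≤ N then f x.val else 0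

/-!
Substituting `b = a + h₁`, `c = a + h₂`, `d = a + h₁ + h₂` turns `M³ ‖f‖⁴_{U²}` into the sum of
`f a · conj (f b) · conj (f c) · f d` over the quadruples with `a + d = b + c` in `ℤ/Mℤ`. When `f`
lives on `[N]` and `M ≥ 2N`, both `a + d` and `b + c` are integers in `[2, 2N]`, so the congruence
is an equality of integers and the sum is the additive-quadruple sum of `f` on `[N]`, which does not
involve `M`. Hence `‖f‖_{U²(ℤ/Mℤ)} = M^{-3/4} · (that sum)^{1/4}` and the factor `M^{-3/4}` cancels
in the ratio.
-/

open ComplexConjugate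

theorem Real.div_rpow_of_pos_right (x : ℝ) {y : ℝ} (hy : 0 < y) (z : ℝ) :
    (x / y) ^ z = x ^ z / y ^ z := by
  rcases lt_or_ge x 0 with hx | hx
  · rw [Real.rpow_def_of_neg (div_neg_of_neg_of_pos hx hy), Real.rpow_def_of_neg hx,
      Real.rpow_def_of_pos hy, Real.log_div hx.ne hy.ne', sub_mul, Real.exp_sub]
    ring
  · exact Real.div_rpow hx hy.le z

theorem sum_parallelogram_eq_sum_ite_add_eq_add {G β : Type*} [AddCommGroup G] [Fintype G]
    [DecidableEq G] [AddCommMonoid β] (Φ : G → G → G → G → β) :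
    ∑ a, ∑ h₁, ∑ h₂, Φ a (a + h₁) (a + h₂) (a + h₁ + h₂) =
      ∑ a, ∑ b, ∑ c, ∑ d, if a + d = b + c then Φ a b c d else 0 := by
  refine Fintype.sum_congr _ _ fun a => ?_
  refine Fintype.sum_equiv (Equiv.addLeft a) _ _ fun h₁ => ?_
  refine Fintype.sum_equiv (Equiv.addLeft a) _ _ fun h₂ => ?_
  simp only [Equiv.coe_addLeft, ← eq_sub_iff_add_eq', Finset.sum_ite_eq', Finset.mem_univ,
    if_true]
  congr 1
  abel

theorem ZMod.natCast_injOn_Icc (M : ℕ) : Set.InjOn (Nat.cast : ℕ → ZMod M) (Set.Icc 1 M) := by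
  intro a ha b hb hab
  refine ((ZMod.natCast_eq_natCast_iff a b M).mp hab).eq_of_abs_lt ?_
  obtain ⟨ha₁, ha₂⟩ := ha
  obtain ⟨hb₁, hb₂⟩ := hb
  rw [abs_sub_lt_iff]
  omega

section Interval

variable {N M : ℕ}

theorem extendZ_natCast (hNM : N < M) (f : ℕ → ℂ) {x : ℕ} (hx : x ∈ Icc 1 N) :
    extendZ N M f x = f x := by
  obtain ⟨hx₁, hx₂⟩ := mem_Icc.mp hx
  simp [extendZ, ZMod.val_cast_of_lt (hx₂.trans_lt hNM), hx₁, hx₂]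

theorem conj_extendZ (f : ℕ → ℂ) (a : ZMod M) :
    conj (extendZ N M f a) = extendZ N M (fun n => conj (f n)) a := by
  simp only [extendZ, apply_ite conj, map_zero]

theorem sum_extendZ_mul [NeZero M] (hNM : N < M) (f : ℕ → ℂ) (g : ZMod M → ℂ) :
    ∑ a, extendZ N M f a * g a = ∑ x ∈ Icc 1 N, f x * g x := by
  refine (sum_of_injOn Nat.cast ((ZMod.natCast_injOn_Icc M).mono ?_) (fun _ _ => mem_univ _)
    ?_ fun x hx => by rw [extendZ_natCast hNM f hx]).symm
  · intro x hx
    simp only [coe_Icc, Set.mem_Icc] at hx ⊢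
    omega
  · intro a _ ha
    rw [extendZ, if_neg, zero_mul]
    exact fun h => ha ⟨a.val, by simpa using h, ZMod.natCast_zmod_val a⟩

theorem natCast_add_eq_natCast_add_iff (hM : 2 * N ≤ M) {x y z w : ℕ} (hx : x ∈ Icc 1 N)
    (hy : y ∈ Icc 1 N) (hz : z ∈ Icc 1 N) (hw : w ∈ Icc 1 N) :
    ((x : ZMod M) + w = y + z) ↔ x + w = y + z := by
  simp only [mem_Icc] at hx hy hz hw
  norm_cast
  exact ⟨fun h => ZMod.natCast_injOn_Icc M ⟨by omega, by omega⟩ ⟨by omega, by omega⟩ h,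
    congrArg _⟩

noncomputable def additiveQuadrupleSum (N : ℕ) (f : ℕ → ℂ) : ℂ :=
  ∑ x ∈ Icc 1 N, ∑ y ∈ Icc 1 N, ∑ z ∈ Icc 1 N, ∑ w ∈ Icc 1 N,
    if x + w = y + z then f x * conj (f y) * conj (f z) * f w else 0

theorem U2p4_extendZ [NeZero M] (hM : 2 * N ≤ M) (f : ℕ → ℂ) :
    U2p4 M (extendZ N M f) = additiveQuadrupleSum N f / (M : ℂ) ^ 3 := by
  have hNM : N < M := by have := NeZero.ne M; omega
  set F := extendZ N M f
  have hsum : ∑ a, ∑ b, ∑ c, ∑ d,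
      (if a + d = b + c then F a * conj (F b) * conj (F c) * F d else 0) =
        additiveQuadrupleSum N f :=
    calc _ = ∑ a, F a * ∑ b, conj (F b) * ∑ c, conj (F c) * ∑ d,
          F d * if a + d = b + c then 1 else 0 := by
          simp only [mul_sum, mul_ite, mul_one, mul_zero, mul_assoc]
      _ = ∑ x ∈ Icc 1 N, f x * ∑ y ∈ Icc 1 N, conj (f y) * ∑ z ∈ Icc 1 N, conj (f z) *
          ∑ w ∈ Icc 1 N, f w * if (x : ZMod M) + w = y + z then 1 else 0 := by
          simp only [F, conj_extendZ, sum_extendZ_mul hNM]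
      _ = ∑ x ∈ Icc 1 N, f x * ∑ y ∈ Icc 1 N, conj (f y) * ∑ z ∈ Icc 1 N, conj (f z) *
          ∑ w ∈ Icc 1 N, f w * if x + w = y + z then 1 else 0 := by
          simp +contextual only [natCast_add_eq_natCast_add_iff hM]
      _ = additiveQuadrupleSum N f := by
          simp only [additiveQuadrupleSum, mul_sum, mul_ite, mul_one, mul_zero, mul_assoc]
  rw [U2p4, sum_parallelogram_eq_sum_ite_add_eq_add (fun a b c d =>
    F a * conj (F b) * conj (F c) * F d), hsum, one_div, inv_mul_eq_div]

theorem u2norm_extendZ [NeZero M] (hM : 2 * N ≤ M) (f : ℕ → ℂ) :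
    u2norm M (extendZ N M f) =
      (additiveQuadrupleSum N f).re ^ ((1 : ℝ) / 4) / ((M : ℝ) ^ 3) ^ ((1 : ℝ) / 4) := by
  have hM3 : (0 : ℝ) < (M : ℝ) ^ 3 := by have := NeZero.pos M; positivity
  rw [u2norm, U2p4_extendZ hM, ← Real.div_rpow_of_pos_right _ hM3]
  norm_cast
  rw [div_natCast_re]

end Interval

theorem u2_ratio_independent_of_M_general (N M₁ M₂ : ℕ) [NeZero M₁] [NeZero M₂]
    (h₁ : 2 * N ≤ M₁) (h₂ : 2 * N ≤ M₂) (f : ℕ → ℂ) :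
    u2norm M₁ (extendZ N M₁ f) / u2norm M₁ (extendZ N M₁ (fun _ => 1)) =
      u2norm M₂ (extendZ N M₂ f) / u2norm M₂ (extendZ N M₂ (fun _ => 1)) := by
  have := NeZero.pos M₁
  have := NeZero.pos M₂
  simp only [u2norm_extendZ h₁, u2norm_extendZ h₂]
  rw [div_div_div_cancel_right₀ (by positivity), div_div_div_cancel_right₀ (by positivity)]

/-- The normalized ratio `‖f‖_{U²(ℤ/Mℤ)} / ‖1_{[N]}‖_{U²(ℤ/Mℤ)}` is independent of the
choice of `M ≥ 2N`. -/
theorem u2_ratio_independent_of_M (N M₁ M₂ : ℕ) [NeZero M₁] [NeZero M₂]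
    (hN : 0 < N) (h₁ : 2 * N ≤ M₁) (h₂ : 2 * N ≤ M₂) (f : ℕ → ℂ) :
    u2norm M₁ (extendZ N M₁ f) / u2norm M₁ (extendZ N M₁ (fun _ => 1)) =
      u2norm M₂ (extendZ N M₂ f) / u2norm M₂ (extendZ N M₂ (fun _ => 1)) :=
  u2_ratio_independent_of_M_general N M₁ M₂ h₁ h₂ f
end

section
/- Inverse theorem for the U² norm: there is a constant c > 0 such that for every δ > 0 and every f : [N] → [-1,1] with ‖f‖_{U²([N])} ≥ δ, there exists θ ∈ ℝ/ℤ such that |E_{n ∈ [N]} f(n) e(-θn)| ≥ c·δ². -/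
open Finset Complex

/-- The `U²([N])` norm: embed `[N]` into `ℤ/Mℤ` with `M = 2N+2 ≥ 2N`, extend by zero,
and normalize by `‖1_{[N]}‖_{U²(ℤ/Mℤ)}`. -/
noncomputable def U2N (N : ℕ) (f : ℕ → ℂ) : ℝ :=
  u2norm (2 * N + 1 + 1) (extendZ N (2 * N + 1 + 1) f) /
    u2norm (2 * N + 1 + 1) (extendZ N (2 * N + 1 + 1) (fun _ => 1))

/-!
Fourier analysis on `ZMod M` with `M = 2N + 2`. Write `ĝ ψ = ∑ₓ conj (ψ x) g x` for a character `ψ`.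
Since `|ĝ ψ|²` is the Fourier transform of the autocorrelation `h ↦ ∑ₓ g (x + h) conj (g x)`,
Parseval applied to the autocorrelation gives `‖g‖⁴_{U²} = M⁻⁴ ∑_ψ |ĝ ψ|⁴`. Bounding two of the
four factors by `max_ψ |ĝ ψ|` and using Parseval once more, `‖g‖⁴_{U²} ≤ M⁻³ N max_ψ |ĝ ψ|²` when
`g` is the extension of `f : [N] → [-1, 1]`, while the trivial character alone gives
`‖1_{[N]}‖⁴_{U²} ≥ (N / M)⁴`.
As `M ≤ 4N`, some character has `|ĝ ψ| ≥ δ² N / 2`, and every character of `ZMod M` is `n ↦ e(θ n)`.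
-/

open ComplexConjugate

namespace GowersU2

section FiniteAbelianGroup

variable {G : Type*} [AddCommGroup G] [Fintype G]

noncomputable def dft (g : G → ℂ) (ψ : AddChar G ℂ) : ℂ := ∑ x, conj (ψ x) * g x

noncomputable def autocorr (g : G → ℂ) (h : G) : ℂ := ∑ x, g (x + h) * conj (g x)

lemma dft_zero (g : G → ℂ) : dft g 0 = ∑ x, g x := by simp [dft]

lemma conj_dft (g : G → ℂ) (ψ : AddChar G ℂ) : conj (dft g ψ) = ∑ x, ψ x * conj (g x) := by
  simp [dft]

lemma dft_mul_conj (g : G → ℂ) (ψ : AddChar G ℂ) :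
    dft g ψ * conj (dft g ψ) = dft (autocorr g) ψ := by
  rw [conj_dft, dft, sum_mul_sum, sum_comm]
  simp only [dft, autocorr, mul_sum]
  conv_rhs => rw [sum_comm]
  refine sum_congr rfl fun y _ => Fintype.sum_equiv (Equiv.subRight y) _ _ fun x => ?_
  rw [Equiv.subRight_apply, add_sub_cancel, sub_eq_add_neg, AddChar.map_add_eq_mul, map_mul,
    ← AddChar.map_neg_eq_conj ψ (-y), neg_neg]
  ring

lemma sum_autocorr_mul_conj (g : G → ℂ) :
    ∑ h, autocorr g h * conj (autocorr g h) = ∑ a, ∑ h₁, ∑ h₂,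
      g a * conj (g (a + h₁)) * conj (g (a + h₂)) * g (a + h₁ + h₂) := by
  calc ∑ h, autocorr g h * conj (autocorr g h)
      = ∑ h, ∑ a, ∑ y, g a * conj (g (a + h)) * conj (g y) * g (y + h) :=
        sum_congr rfl fun h _ => by
          rw [mul_comm, autocorr, map_sum, sum_mul_sum]
          refine sum_congr rfl fun a _ => sum_congr rfl fun y _ => ?_
          rw [map_mul, conj_conj]
          ring
    _ = ∑ a, ∑ h₁, ∑ h₂, g a * conj (g (a + h₁)) * conj (g (a + h₂)) * g (a + h₁ + h₂) := by
        rw [sum_comm]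
        refine sum_congr rfl fun a _ => sum_congr rfl fun h _ =>
          Fintype.sum_equiv (Equiv.subRight a) _ _ fun y => ?_
        rw [Equiv.subRight_apply, add_sub_cancel, show a + h + (y - a) = y + h by abel]

lemma norm_sum_pow_four_le (g : G → ℂ) : ‖∑ x, g x‖ ^ 4 ≤ ∑ ψ, ‖dft g ψ‖ ^ 4 := by
  rw [← dft_zero]
  exact single_le_sum (f := fun ψ => ‖dft g ψ‖ ^ 4) (fun ψ _ => by positivity) (mem_univ 0)

variable [DecidableEq G]

lemma sum_conj_mul_apply (x y : G) :
    ∑ ψ : AddChar G ℂ, conj (ψ x) * ψ y = if x = y then (Fintype.card G : ℂ) else 0 := by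
  simp only [← AddChar.map_neg_eq_conj, ← AddChar.map_add_eq_mul, AddChar.sum_apply_eq_ite,
    neg_add_eq_zero]

theorem sum_dft_mul_conj (g : G → ℂ) :
    ∑ ψ, dft g ψ * conj (dft g ψ) = Fintype.card G * ∑ x, g x * conj (g x) := by
  calc ∑ ψ, dft g ψ * conj (dft g ψ)
      = ∑ ψ : AddChar G ℂ, ∑ x, ∑ y, g x * conj (g y) * (conj (ψ x) * ψ y) :=
        sum_congr rfl fun ψ _ => by
          rw [conj_dft, dft, sum_mul_sum]
          exact sum_congr rfl fun x _ => sum_congr rfl fun y _ => by ring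
    _ = ∑ x, ∑ y, g x * conj (g y) * ∑ ψ : AddChar G ℂ, conj (ψ x) * ψ y := by
        simp only [mul_sum]
        rw [sum_comm]
        exact sum_congr rfl fun x _ => sum_comm
    _ = Fintype.card G * ∑ x, g x * conj (g x) := by
        simp only [sum_conj_mul_apply, mul_ite, mul_zero, sum_ite_eq, mem_univ, if_true, mul_sum]
        exact sum_congr rfl fun x _ => mul_comm _ _

lemma sum_norm_dft_sq (g : G → ℂ) :
    ∑ ψ, ‖dft g ψ‖ ^ 2 = Fintype.card G * ∑ x, ‖g x‖ ^ 2 := by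
  apply Complex.ofReal_injective
  push_cast
  simp only [← mul_conj']
  exact sum_dft_mul_conj g

theorem sum_norm_dft_pow_four (g : G → ℂ) :
    ∑ ψ, (‖dft g ψ‖ ^ 4 : ℂ) = Fintype.card G * ∑ a, ∑ h₁, ∑ h₂,
      g a * conj (g (a + h₁)) * conj (g (a + h₂)) * g (a + h₁ + h₂) := by
  have hsq : ∀ ψ, (‖dft g ψ‖ ^ 4 : ℂ) = dft (autocorr g) ψ * conj (dft (autocorr g) ψ) := by
    intro ψ
    rw [← dft_mul_conj, map_mul, conj_conj, mul_comm (conj _), mul_conj']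
    ring
  simp only [hsq, sum_dft_mul_conj, sum_autocorr_mul_conj]

theorem exists_sum_norm_dft_pow_four_le (g : G → ℂ) :
    ∃ ψ, ∑ ψ', ‖dft g ψ'‖ ^ 4 ≤ ‖dft g ψ‖ ^ 2 * (Fintype.card G * ∑ x, ‖g x‖ ^ 2) := by
  obtain ⟨ψ, -, hψ⟩ := exists_max_image univ (fun ψ => ‖dft g ψ‖) univ_nonempty
  refine ⟨ψ, ?_⟩
  calc ∑ ψ', ‖dft g ψ'‖ ^ 4 = ∑ ψ', ‖dft g ψ'‖ ^ 2 * ‖dft g ψ'‖ ^ 2 :=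
        sum_congr rfl fun _ _ => by ring
    _ ≤ ∑ ψ', ‖dft g ψ‖ ^ 2 * ‖dft g ψ'‖ ^ 2 := by
        gcongr with ψ' _
        exact hψ ψ' (mem_univ _)
    _ = ‖dft g ψ‖ ^ 2 * (Fintype.card G * ∑ x, ‖g x‖ ^ 2) := by
        rw [← mul_sum, sum_norm_dft_sq]

end FiniteAbelianGroup

section ZMod

variable {M : ℕ}

lemma extendZ_natCast {N : ℕ} (hNM : N < M) (f : ℕ → ℂ) {n : ℕ} (hn : n ∈ Icc 1 N) :
    extendZ N M f n = f n := by
  rw [mem_Icc] at hn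
  simp [extendZ, ZMod.val_natCast_of_lt (hn.2.trans_lt hNM), hn]

variable [NeZero M]

lemma sum_extendZ {β : Type*} [AddCommMonoid β] {N : ℕ} (hNM : N < M) (F : ZMod M → ℂ → β)
    (hF : ∀ x, F x 0 = 0) (f : ℕ → ℂ) :
    ∑ x, F x (extendZ N M f x) = ∑ n ∈ Icc 1 N, F n (f n) := by
  have hinj : Set.InjOn (Nat.cast : ℕ → ZMod M) (Icc 1 N) := fun m hm n hn hmn => by
    rw [coe_Icc, Set.mem_Icc] at hm hn
    rw [← ZMod.val_natCast_of_lt (hm.2.trans_lt hNM), hmn,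
      ZMod.val_natCast_of_lt (hn.2.trans_lt hNM)]
  have hout : ∀ x ∉ (Icc 1 N).image (Nat.cast : ℕ → ZMod M), F x (extendZ N M f x) = 0 := by
    intro x hx
    have : ¬ (1 ≤ x.val ∧ x.val ≤ N) := fun h =>
      hx (mem_image.2 ⟨x.val, mem_Icc.2 h, ZMod.natCast_zmod_val x⟩)
    simp [extendZ, this, hF]
  rw [← sum_subset (subset_univ _) fun x _ hx => hout x hx, sum_image hinj]
  exact sum_congr rfl fun n hn => by rw [extendZ_natCast hNM f hn]

lemma dft_extendZ {N : ℕ} (hNM : N < M) (f : ℕ → ℂ) (ψ : AddChar (ZMod M) ℂ) :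
    dft (extendZ N M f) ψ = ∑ n ∈ Icc 1 N, conj (ψ n) * f n :=
  sum_extendZ hNM (fun x z => conj (ψ x) * z) (fun _ => mul_zero _) f

lemma exists_conj_apply_eq_exp (ψ : AddChar (ZMod M) ℂ) :
    ∃ θ : ℝ, ∀ n : ℕ, conj (ψ n) = exp (-(2 * Real.pi * I) * θ * n) := by
  obtain ⟨a, ha⟩ : ∃ a : ℝ, ψ (-1) = exp (a * I) :=
    ⟨_, by simpa [AddChar.norm_apply] using (norm_mul_exp_arg_mul_I (ψ (-1))).symm⟩
  refine ⟨-a / (2 * Real.pi), fun n => ?_⟩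
  rw [← AddChar.map_neg_eq_conj, ← nsmul_one, ← smul_neg, AddChar.map_nsmul_eq_pow, ha,
    ← exp_nat_mul]
  congr 1
  push_cast
  field_simp

lemma U2p4_eq (g : ZMod M → ℂ) :
    U2p4 M g = ((∑ ψ, ‖dft g ψ‖ ^ 4 / (M : ℝ) ^ 4 : ℝ) : ℂ) := by
  have hM : (M : ℂ) ≠ 0 := NeZero.ne _
  have h := sum_norm_dft_pow_four g
  rw [ZMod.card] at h
  rw [U2p4, ← sum_div]
  push_cast
  rw [h]
  field_simp

lemma u2norm_nonneg (g : ZMod M → ℂ) : 0 ≤ u2norm M g :=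
  Real.rpow_nonneg (by rw [U2p4_eq, ofReal_re]; positivity) _

lemma u2norm_pow_four (g : ZMod M → ℂ) :
    u2norm M g ^ 4 = ∑ ψ, ‖dft g ψ‖ ^ 4 / (M : ℝ) ^ 4 := by
  rw [u2norm, U2p4_eq, ofReal_re, ← Real.rpow_natCast, ← Real.rpow_mul (by positivity)]
  norm_num

lemma div_pow_four_le_u2norm_extendZ_one {N : ℕ} (hNM : N < M) :
    ((N : ℝ) / M) ^ 4 ≤ u2norm M (extendZ N M fun _ => 1) ^ 4 := by
  have hsum : ∑ x, extendZ N M (fun _ => 1) x = N := by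
    simpa using sum_extendZ hNM (fun _ z => z) (fun _ => rfl) (fun _ => 1)
  rw [u2norm_pow_four, ← sum_div, div_pow]
  gcongr
  simpa [hsum] using norm_sum_pow_four_le (extendZ N M fun _ => 1)

lemma exists_u2norm_extendZ_pow_four_le {N : ℕ} (hNM : N < M) (f : ℕ → ℂ)
    (hf : ∀ n ∈ Icc 1 N, ‖f n‖ ≤ 1) :
    ∃ ψ, u2norm M (extendZ N M f) ^ 4 ≤ ‖dft (extendZ N M f) ψ‖ ^ 2 * N / M ^ 3 := by
  have hL2 : ∑ x, ‖extendZ N M f x‖ ^ 2 ≤ N := by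
    rw [sum_extendZ hNM (fun _ z => ‖z‖ ^ 2) (fun _ => by simp)]
    calc ∑ n ∈ Icc 1 N, ‖f n‖ ^ 2 ≤ ∑ n ∈ Icc 1 N, (1 : ℝ) :=
          sum_le_sum fun n hn => pow_le_one₀ (norm_nonneg _) (hf n hn)
      _ = N := by simp
  obtain ⟨ψ, hψ⟩ := exists_sum_norm_dft_pow_four_le (extendZ N M f)
  refine ⟨ψ, ?_⟩
  have hM : (0 : ℝ) < M := by exact_mod_cast Nat.pos_of_neZero M
  rw [ZMod.card] at hψ
  rw [u2norm_pow_four, ← sum_div, div_le_iff₀ (by positivity)]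
  calc ∑ ψ', ‖dft (extendZ N M f) ψ'‖ ^ 4
      ≤ ‖dft (extendZ N M f) ψ‖ ^ 2 * (M * ∑ x, ‖extendZ N M f x‖ ^ 2) := hψ
    _ ≤ ‖dft (extendZ N M f) ψ‖ ^ 2 * (M * N) := by gcongr
    _ = ‖dft (extendZ N M f) ψ‖ ^ 2 * N / M ^ 3 * M ^ 4 := by field_simp

lemma exists_norm_dft_ge_of_le_U2N {N : ℕ} (hN : 0 < N) {δ : ℝ} (hδ : 0 ≤ δ) (f : ℕ → ℂ)
    (hf : ∀ n ∈ Icc 1 N, ‖f n‖ ≤ 1) (hU : δ ≤ U2N N f) :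
    ∃ ψ, δ ^ 2 * N / 2 ≤ ‖dft (extendZ N (2 * N + 1 + 1) f) ψ‖ := by
  set M := 2 * N + 1 + 1
  have hNM : N < M := by omega
  have hone := div_pow_four_le_u2norm_extendZ_one (M := M) hNM
  obtain ⟨ψ, hψ⟩ := exists_u2norm_extendZ_pow_four_le hNM f hf
  refine ⟨ψ, ?_⟩
  set X := ‖dft (extendZ N M f) ψ‖
  have hNr : (0 : ℝ) < N := by exact_mod_cast hN
  have hMr : (M : ℝ) ≤ 4 * N := by norm_cast; omega
  have hone_pos : 0 < u2norm M (extendZ N M fun _ => 1) :=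
    (by positivity : (0 : ℝ) < N / M).trans_le
      ((pow_le_pow_iff_left₀ (by positivity) (u2norm_nonneg _) four_ne_zero).1 hone)
  have hδU : δ * u2norm M (extendZ N M fun _ => 1) ≤ u2norm M (extendZ N M f) :=
    (le_div_iff₀ hone_pos).1 hU
  have key : δ ^ 4 * ((N : ℝ) / M) ^ 4 ≤ X ^ 2 * N / M ^ 3 :=
    calc δ ^ 4 * ((N : ℝ) / M) ^ 4 ≤ (δ * u2norm M (extendZ N M fun _ => 1)) ^ 4 := by
          rw [mul_pow]; gcongr
      _ ≤ u2norm M (extendZ N M f) ^ 4 := by gcongr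
      _ ≤ X ^ 2 * N / M ^ 3 := hψ
  rw [div_pow, mul_div, div_le_div_iff₀ (by positivity) (by positivity)] at key
  have hcube : δ ^ 4 * N ^ 3 ≤ X ^ 2 * M :=
    le_of_mul_le_mul_right (a := (N : ℝ) * M ^ 3) (by linarith) (by positivity)
  have : (δ ^ 2 * N / 2) ^ 2 ≤ X ^ 2 := by
    refine le_of_mul_le_mul_right (a := 4 * (N : ℝ)) ?_ (by positivity)
    nlinarith [sq_nonneg X]
  exact (pow_le_pow_iff_left₀ (by positivity) (norm_nonneg _) two_ne_zero).1 this

end ZMod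

end GowersU2

/-- Inverse theorem for the `U²` norm: if `f : [N] → [-1,1]` has `‖f‖_{U²([N])} ≥ δ`
then `f` correlates with a linear phase `e(-θn)`, with correlation `≥ c δ²`. -/
theorem u2_inverse_theorem :
    ∃ c : ℝ, 0 < c ∧ ∀ (δ : ℝ) (N : ℕ) (f : ℕ → ℝ), 0 < δ → 0 < N →
      (∀ n ∈ Finset.Icc 1 N, f n ∈ Set.Icc (-1 : ℝ) 1) →
      δ ≤ U2N N (fun n => (f n : ℂ)) →
      ∃ θ : ℝ, c * δ ^ 2 ≤ ‖((1 / (N : ℂ)) *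
        ∑ n ∈ Finset.Icc 1 N, (f n : ℂ) * Complex.exp (-(2 * Real.pi * Complex.I) * θ * n))‖ := by
  refine ⟨1 / 2, one_half_pos, fun δ N f hδ hN hf hU => ?_⟩
  have hf' : ∀ n ∈ Icc 1 N, ‖(f n : ℂ)‖ ≤ 1 := fun n hn => by
    rw [norm_real, Real.norm_eq_abs, abs_le]
    exact hf n hn
  obtain ⟨ψ, hψ⟩ := GowersU2.exists_norm_dft_ge_of_le_U2N hN hδ.le _ hf' hU
  obtain ⟨θ, hθ⟩ := GowersU2.exists_conj_apply_eq_exp ψ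
  refine ⟨θ, ?_⟩
  have hsum : GowersU2.dft (extendZ N (2 * N + 1 + 1) fun n => (f n : ℂ)) ψ =
      ∑ n ∈ Icc 1 N, (f n : ℂ) * exp (-(2 * Real.pi * I) * θ * n) := by
    rw [GowersU2.dft_extendZ (by omega)]
    exact sum_congr rfl fun n _ => by rw [hθ, mul_comm]
  have hNr : (0 : ℝ) < N := by exact_mod_cast hN
  rw [norm_mul, norm_div, norm_one, norm_natCast, ← hsum]
  calc 1 / 2 * δ ^ 2 = 1 / N * (δ ^ 2 * N / 2) := by field_simp
    _ ≤ _ := by gcongr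
end

section
/- Energy increment lemma: for every δ > 0 there is c(δ) > 0 such that the following holds. Let B be a partition of [N] into at most M cells and f : [N] → [-1,1] with ‖f - E(f|B)‖_{U²([N])} ≥ δ. Then there exists a refinement B′ of B with at most 2M cells such that ‖E(f|B′)‖₂² - ‖E(f|B)‖₂² ≥ c(δ). -/
open Finset Complex
open scoped Classical

/-- Conditional expectation with respect to the partition of `[N]` induced by `π`. -/
noncomputable def condExpPart {α : Type*} (N : ℕ) (π : ℕ → α) (f : ℕ → ℝ) (x : ℕ) : ℝ :=
  (∑ y ∈ (Finset.Icc 1 N).filter (fun y => π y = π x), f y) /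
    (((Finset.Icc 1 N).filter (fun y => π y = π x)).card : ℝ)

/-- The energy `E(B) = ‖E(f|B)‖₂²`. -/
noncomputable def energy {α : Type*} (N : ℕ) (π : ℕ → α) (f : ℕ → ℝ) : ℝ :=
  (1 / (N : ℝ)) * ∑ x ∈ Finset.Icc 1 N, (condExpPart N π f x) ^ 2

/-! Write `g = f - E(f|B)`, so `|g| ≤ 2`. On `ℤ/Mℤ` the fourth power of the `U²` norm is the mean
square of the autocorrelations `∑ₐ g(a) ḡ(a + h)`, each bounded by `‖g‖_∞ ‖g‖₁`, while by
Cauchy–Schwarz `‖F‖_{U²} ≥ |𝔼 F|`; applied to `1_{[N]}` the latter bounds the normalising factor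
below by the density `N / M ≥ 1/4`. Together, `δ ≤ ‖g‖_{U²([N])}` forces `𝔼|g| ≥ δ² / 8`.

Splitting every cell of `B` by the sign of `g` gives `B′`. The energy increment is
`‖E(f|B′) - E(f|B)‖₂²` (Pythagoras), and since `sign g` is constant on the cells of `B′`, testing
`E(f|B′) - E(f|B)` against it returns `𝔼|g|`; Cauchy–Schwarz then gives an increment of at least
`(𝔼|g|)² ≥ δ⁴ / 64`. -/

open ComplexConjugate

namespace U2Norm

variable {M : ℕ} [NeZero M]

theorem U2p4_eq_sum_norm_sq (f : ZMod M → ℂ) :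
    U2p4 M f = ((1 / (M : ℝ) ^ 3 * ∑ h : ZMod M, ‖∑ a, f a * conj (f (a + h))‖ ^ 2 : ℝ) : ℂ) := by
  have key : ∀ h : ZMod M, ∑ a, ∑ b, f a * conj (f (a + h)) * conj (f b) * f (b + h)
      = ((‖∑ a, f a * conj (f (a + h))‖ ^ 2 : ℝ) : ℂ) := by
    intro h
    rw [Complex.ofReal_pow, ← Complex.mul_conj', map_sum, Finset.sum_mul_sum]
    simp only [map_mul, Complex.conj_conj, mul_assoc]
  simp only [U2p4, Complex.ofReal_mul, Complex.ofReal_sum, ← key]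
  push_cast
  rw [Finset.sum_comm]
  refine congrArg _ (Finset.sum_congr rfl fun h₁ _ => Finset.sum_congr rfl fun a _ => ?_)
  simpa only [Equiv.coe_addLeft, add_right_comm a h₁] using
    Equiv.sum_comp (Equiv.addLeft a) fun b => f a * conj (f (a + h₁)) * conj (f b) * f (b + h₁)

theorem U2p4_re_eq (f : ZMod M → ℂ) :
    (U2p4 M f).re = 1 / (M : ℝ) ^ 3 * ∑ h : ZMod M, ‖∑ a, f a * conj (f (a + h))‖ ^ 2 := by
  rw [U2p4_eq_sum_norm_sq, Complex.ofReal_re]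

theorem U2p4_re_nonneg (f : ZMod M → ℂ) : 0 ≤ (U2p4 M f).re := by
  rw [U2p4_re_eq]; positivity

theorem norm_sum_div_pow_four_le_U2p4_re (f : ZMod M → ℂ) :
    (‖∑ a, f a‖ / M) ^ 4 ≤ (U2p4 M f).re := by
  have hsum : ∑ h : ZMod M, ∑ a, f a * conj (f (a + h)) = ((‖∑ a, f a‖ ^ 2 : ℝ) : ℂ) := by
    rw [Finset.sum_comm, Complex.ofReal_pow, ← Complex.mul_conj', Finset.sum_mul]
    refine Finset.sum_congr rfl fun a _ => ?_
    rw [← Finset.mul_sum, map_sum]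
    exact congrArg _ (Equiv.sum_comp (Equiv.addLeft a) fun b => conj (f b))
  have hcs : ‖∑ a, f a‖ ^ 4 ≤ M * ∑ h : ZMod M, ‖∑ a, f a * conj (f (a + h))‖ ^ 2 :=
    calc ‖∑ a, f a‖ ^ 4 = ‖∑ h : ZMod M, ∑ a, f a * conj (f (a + h))‖ ^ 2 := by
          rw [hsum, Complex.norm_real, Real.norm_of_nonneg (by positivity)]; ring
      _ ≤ (∑ h : ZMod M, ‖∑ a, f a * conj (f (a + h))‖) ^ 2 := by
          gcongr; exact norm_sum_le _ _
      _ ≤ M * ∑ h : ZMod M, ‖∑ a, f a * conj (f (a + h))‖ ^ 2 := by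
          simpa using sq_sum_le_card_mul_sum_sq (s := Finset.univ)
            (f := fun h : ZMod M => ‖∑ a, f a * conj (f (a + h))‖)
  have hM : (0 : ℝ) < M := Nat.cast_pos.2 (NeZero.pos M)
  rw [U2p4_re_eq, div_pow]
  calc ‖∑ a, f a‖ ^ 4 / M ^ 4
      ≤ (M * ∑ h : ZMod M, ‖∑ a, f a * conj (f (a + h))‖ ^ 2) / M ^ 4 := by gcongr
    _ = _ := by field_simp

theorem U2p4_re_le {f : ZMod M → ℂ} {C : ℝ} (hf : ∀ a, ‖f a‖ ≤ C) :
    (U2p4 M f).re ≤ (C * (∑ a, ‖f a‖) / M) ^ 2 := by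
  have hcorr : ∀ h, ‖∑ a, f a * conj (f (a + h))‖ ≤ C * ∑ a, ‖f a‖ := fun h =>
    calc ‖∑ a, f a * conj (f (a + h))‖ ≤ ∑ a, ‖f a‖ * C := by
          refine (norm_sum_le _ _).trans (Finset.sum_le_sum fun a _ => ?_)
          rw [norm_mul, Complex.norm_conj]
          exact mul_le_mul_of_nonneg_left (hf _) (norm_nonneg _)
      _ = C * ∑ a, ‖f a‖ := by rw [← Finset.sum_mul, mul_comm]
  have hM : (0 : ℝ) < M := Nat.cast_pos.2 (NeZero.pos M)
  rw [U2p4_re_eq]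
  calc 1 / (M : ℝ) ^ 3 * ∑ h : ZMod M, ‖∑ a, f a * conj (f (a + h))‖ ^ 2
      ≤ 1 / (M : ℝ) ^ 3 * ∑ _h : ZMod M, (C * ∑ a, ‖f a‖) ^ 2 := by
        gcongr with h; exact hcorr h
    _ = (C * (∑ a, ‖f a‖) / M) ^ 2 := by
        rw [Finset.sum_const, Finset.card_univ, ZMod.card, nsmul_eq_mul]
        field_simp

theorem u2norm_pow_four (f : ZMod M → ℂ) : u2norm M f ^ 4 = (U2p4 M f).re := by
  rw [u2norm, ← Real.rpow_natCast, ← Real.rpow_mul (U2p4_re_nonneg f)]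
  norm_num

theorem norm_sum_div_le_u2norm (f : ZMod M → ℂ) : ‖∑ a, f a‖ / M ≤ u2norm M f := by
  refine le_of_pow_le_pow_left₀ four_ne_zero (Real.rpow_nonneg (U2p4_re_nonneg f) _) ?_
  rw [u2norm_pow_four]
  exact norm_sum_div_pow_four_le_U2p4_re f

end U2Norm

theorem sum_ite_val_mem_Icc {β : Type*} [AddCommMonoid β] {N M : ℕ} [NeZero M] (hNM : N < M)
    (φ : ℕ → β) :
    ∑ x : ZMod M, (if 1 ≤ x.val ∧ x.val ≤ N then φ x.val else 0) = ∑ n ∈ Icc 1 N, φ n := by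
  rw [← Finset.sum_filter]
  refine Finset.sum_nbij' ZMod.val Nat.cast ?_ ?_ ?_ ?_ fun _ _ => rfl
  · intro x hx; simpa using hx
  · intro n hn
    have hn' := Finset.mem_Icc.1 hn
    simp [ZMod.val_cast_of_lt (hn'.2.trans_lt hNM), hn']
  · intro x _; simp
  · intro n hn; exact ZMod.val_cast_of_lt ((Finset.mem_Icc.1 hn).2.trans_lt hNM)

theorem sum_extendZ {N M : ℕ} [NeZero M] (hNM : N < M) (F : ℕ → ℂ) :
    ∑ a, extendZ N M F a = ∑ n ∈ Icc 1 N, F n :=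
  sum_ite_val_mem_Icc hNM F

theorem U2N_sq_le {N : ℕ} (hN : 0 < N) {F : ℕ → ℂ} {C : ℝ} (hF : ∀ n ∈ Icc 1 N, ‖F n‖ ≤ C) :
    U2N N F ^ 2 ≤ 4 * C * ((∑ n ∈ Icc 1 N, ‖F n‖) / N) := by
  set M := 2 * N + 1 + 1
  have hNM : N < M := by omega
  have hC : 0 ≤ C := (norm_nonneg _).trans (hF 1 (Finset.mem_Icc.2 ⟨le_rfl, hN⟩))
  have hNpos : (0 : ℝ) < N := Nat.cast_pos.2 hN
  have hMpos : (0 : ℝ) < M := by positivity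
  set S := ∑ n ∈ Icc 1 N, ‖F n‖
  have hS : 0 ≤ S := Finset.sum_nonneg fun _ _ => norm_nonneg _
  have hden : (N : ℝ) / M ≤ u2norm M (extendZ N M fun _ => 1) := by
    have h := U2Norm.norm_sum_div_le_u2norm (extendZ N M fun _ => 1)
    rwa [sum_extendZ hNM, Finset.sum_const, Nat.card_Icc, nsmul_eq_mul,
      mul_one, Nat.add_sub_cancel, Complex.norm_natCast] at h
  have hnum : u2norm M (extendZ N M F) ^ 2 ≤ C * S / M := by
    have hbound : ∀ a, ‖extendZ N M F a‖ ≤ C := fun a => by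
      unfold extendZ; split_ifs with h
      · exact hF _ (Finset.mem_Icc.2 h)
      · simpa using hC
    have hsum : ∑ a, ‖extendZ N M F a‖ = S := by
      simp only [extendZ, apply_ite norm, norm_zero]
      exact sum_ite_val_mem_Icc hNM fun n => ‖F n‖
    have h := U2Norm.U2p4_re_le hbound
    rw [hsum, ← U2Norm.u2norm_pow_four] at h
    exact le_of_pow_le_pow_left₀ two_ne_zero (by positivity) (by rwa [← pow_mul])
  calc U2N N F ^ 2
      = u2norm M (extendZ N M F) ^ 2 / u2norm M (extendZ N M fun _ => 1) ^ 2 := div_pow _ _ _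
    _ ≤ (C * S / M) / (N / M) ^ 2 := by gcongr
    _ = C * S * M / N ^ 2 := by field_simp
    _ ≤ C * S * (4 * N) / N ^ 2 := by
        gcongr
        simp only [M]; push_cast; linarith [(Nat.one_le_cast (α := ℝ)).2 hN]
    _ = 4 * C * (S / N) := by field_simp

section CondExp

variable {α β : Type*} {N : ℕ}

theorem condExpPart_eq_of_eq {π : ℕ → α} (f : ℕ → ℝ) {x y : ℕ} (h : π x = π y) :
    condExpPart N π f x = condExpPart N π f y := by
  rw [condExpPart, condExpPart, h]

theorem abs_condExpPart_le {π : ℕ → α} {f : ℕ → ℝ} {C : ℝ} (hC : 0 ≤ C)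
    (hf : ∀ n ∈ Icc 1 N, |f n| ≤ C) (x : ℕ) : |condExpPart N π f x| ≤ C := by
  rw [condExpPart, abs_div, Nat.abs_cast]
  refine div_le_of_le_mul₀ (Nat.cast_nonneg _) hC ?_
  calc |∑ y ∈ Icc 1 N with π y = π x, f y| ≤ ∑ y ∈ Icc 1 N with π y = π x, |f y| :=
        Finset.abs_sum_le_sum_abs _ _
    _ ≤ ∑ _y ∈ {y ∈ Icc 1 N | π y = π x}, C :=
        Finset.sum_le_sum fun y hy => hf y (Finset.mem_filter.1 hy).1
    _ = C * #{y ∈ Icc 1 N | π y = π x} := by rw [Finset.sum_const, nsmul_eq_mul, mul_comm]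

theorem sum_mul_condExpPart {π : ℕ → α} {u : ℕ → ℝ}
    (hu : ∀ x ∈ Icc 1 N, ∀ y ∈ Icc 1 N, π x = π y → u x = u y) (g : ℕ → ℝ) :
    ∑ x ∈ Icc 1 N, u x * condExpPart N π g x = ∑ x ∈ Icc 1 N, u x * g x := by
  have hmaps : ∀ x ∈ Icc 1 N, π x ∈ (Icc 1 N).image π := fun x hx => mem_image_of_mem π hx
  rw [← Finset.sum_fiberwise_of_maps_to hmaps, ← Finset.sum_fiberwise_of_maps_to hmaps]
  refine Finset.sum_congr rfl fun c hc => ?_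
  obtain ⟨x₀, hx₀, rfl⟩ := Finset.mem_image.1 hc
  have hcard : (#{x ∈ Icc 1 N | π x = π x₀} : ℝ) ≠ 0 :=
    Nat.cast_ne_zero.2 (Finset.card_ne_zero.2 ⟨x₀, Finset.mem_filter.2 ⟨hx₀, rfl⟩⟩)
  calc ∑ x ∈ Icc 1 N with π x = π x₀, u x * condExpPart N π g x
      = ∑ _x ∈ {x ∈ Icc 1 N | π x = π x₀}, u x₀ * condExpPart N π g x₀ :=
        Finset.sum_congr rfl fun x hx => by
          obtain ⟨hx, hπx⟩ := Finset.mem_filter.1 hx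
          rw [hu x hx x₀ hx₀ hπx, condExpPart_eq_of_eq g hπx]
    _ = u x₀ * ∑ x ∈ Icc 1 N with π x = π x₀, g x := by
        rw [Finset.sum_const, nsmul_eq_mul, condExpPart]
        field_simp
    _ = ∑ x ∈ Icc 1 N with π x = π x₀, u x * g x := by
        rw [Finset.mul_sum]
        exact Finset.sum_congr rfl fun x hx => by
          obtain ⟨hx, hπx⟩ := Finset.mem_filter.1 hx
          rw [hu x hx x₀ hx₀ hπx]

theorem energy_sub_energy_of_refines {π : ℕ → α} {π' : ℕ → β}
    (href : ∀ x ∈ Icc 1 N, ∀ y ∈ Icc 1 N, π' x = π' y → π x = π y) (f : ℕ → ℝ) :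
    energy N π' f - energy N π f
      = 1 / N * ∑ x ∈ Icc 1 N, (condExpPart N π' f x - condExpPart N π f x) ^ 2 := by
  rw [energy, energy, ← mul_sub]
  set P := condExpPart N π f
  set P' := condExpPart N π' f
  have hP : ∑ x ∈ Icc 1 N, P x ^ 2 = ∑ x ∈ Icc 1 N, P x * f x := by
    simp only [sq]
    exact sum_mul_condExpPart (fun x _ y _ h => condExpPart_eq_of_eq f h) f
  have hP' : ∑ x ∈ Icc 1 N, P x * P' x = ∑ x ∈ Icc 1 N, P x * f x :=
    sum_mul_condExpPart (fun x hx y hy h => condExpPart_eq_of_eq f (href x hx y hy h)) f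
  have hexpand : ∑ x ∈ Icc 1 N, (P' x - P x) ^ 2
      = ∑ x ∈ Icc 1 N, P' x ^ 2 - 2 * ∑ x ∈ Icc 1 N, P x * P' x
        + ∑ x ∈ Icc 1 N, P x ^ 2 := by
    simp only [Finset.mul_sum, ← Finset.sum_sub_distrib, ← Finset.sum_add_distrib]
    exact Finset.sum_congr rfl fun x _ => by ring
  rw [hexpand, hP, hP']
  ring

theorem sq_sum_mul_sub_le {π' : ℕ → β} {s : ℕ → ℝ} (hs : ∀ x ∈ Icc 1 N, s x ^ 2 ≤ 1)
    (hconst : ∀ x ∈ Icc 1 N, ∀ y ∈ Icc 1 N, π' x = π' y → s x = s y) (f b : ℕ → ℝ) :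
    (∑ x ∈ Icc 1 N, s x * (f x - b x)) ^ 2
      ≤ N * ∑ x ∈ Icc 1 N, (condExpPart N π' f x - b x) ^ 2 := by
  have hshift : ∑ x ∈ Icc 1 N, s x * (f x - b x)
      = ∑ x ∈ Icc 1 N, s x * (condExpPart N π' f x - b x) := by
    simp only [mul_sub, Finset.sum_sub_distrib, sum_mul_condExpPart hconst f]
  calc (∑ x ∈ Icc 1 N, s x * (f x - b x)) ^ 2
      ≤ (∑ x ∈ Icc 1 N, s x ^ 2) * ∑ x ∈ Icc 1 N, (condExpPart N π' f x - b x) ^ 2 := by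
        rw [hshift]; exact Finset.sum_mul_sq_le_sq_mul_sq _ _ _
    _ ≤ N * ∑ x ∈ Icc 1 N, (condExpPart N π' f x - b x) ^ 2 := by
        gcongr
        calc ∑ x ∈ Icc 1 N, s x ^ 2 ≤ ∑ _x ∈ Icc 1 N, (1 : ℝ) := Finset.sum_le_sum hs
          _ = N := by simp

end CondExp

noncomputable def splitBySign (π : ℕ → ℕ) (g : ℕ → ℝ) (n : ℕ) : ℕ :=
  2 * π n + if 0 ≤ g n then 0 else 1

theorem splitBySign_eq_splitBySign_iff {π : ℕ → ℕ} {g : ℕ → ℝ} {x y : ℕ} :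
    splitBySign π g x = splitBySign π g y ↔ π x = π y ∧ (0 ≤ g x ↔ 0 ≤ g y) := by
  unfold splitBySign
  by_cases hx : 0 ≤ g x <;> by_cases hy : 0 ≤ g y <;> simp [hx, hy] <;> omega

theorem card_image_splitBySign_le (π : ℕ → ℕ) (g : ℕ → ℝ) (s : Finset ℕ) :
    #(s.image (splitBySign π g)) ≤ 2 * #(s.image π) := by
  calc #(s.image (splitBySign π g)) ≤ #((s.image π).biUnion fun m => {2 * m, 2 * m + 1}) := by
        refine Finset.card_le_card fun k hk => ?_
        obtain ⟨n, hn, rfl⟩ := Finset.mem_image.1 hk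
        refine Finset.mem_biUnion.2 ⟨π n, Finset.mem_image_of_mem π hn, ?_⟩
        unfold splitBySign
        split_ifs <;> simp
    _ ≤ #(s.image π) * 2 := Finset.card_biUnion_le_card_mul _ _ _ fun _ _ => Finset.card_le_two
    _ = 2 * #(s.image π) := mul_comm _ _

theorem sq_sum_abs_div_le_energy_splitBySign_sub {N : ℕ} (π : ℕ → ℕ) (f : ℕ → ℝ) :
    ((∑ n ∈ Icc 1 N, |f n - condExpPart N π f n|) / N) ^ 2
      ≤ energy N (splitBySign π fun n => f n - condExpPart N π f n) f - energy N π f := by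
  set g := fun n => f n - condExpPart N π f n
  set s : ℕ → ℝ := fun n => if 0 ≤ g n then 1 else -1
  have hsg : ∀ n, s n * g n = |g n| := fun n => by
    by_cases h : 0 ≤ g n
    · simp [s, h, abs_of_nonneg h]
    · simp [s, h, abs_of_neg (not_le.1 h)]
  have hs : ∀ n ∈ Icc 1 N, s n ^ 2 ≤ 1 := fun n _ => by
    by_cases h : 0 ≤ g n <;> simp [s, h]
  have hconst : ∀ x ∈ Icc 1 N, ∀ y ∈ Icc 1 N,
      splitBySign π g x = splitBySign π g y → s x = s y := fun x _ y _ h => by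
    simp only [s, (splitBySign_eq_splitBySign_iff.1 h).2]
  have hcs := sq_sum_mul_sub_le hs hconst f (condExpPart N π f)
  change (∑ x ∈ Icc 1 N, s x * g x) ^ 2 ≤ _ at hcs
  simp only [hsg] at hcs
  rw [energy_sub_energy_of_refines
    (fun x _ y _ h => (splitBySign_eq_splitBySign_iff.1 h).1), div_pow]
  rcases N.eq_zero_or_pos with rfl | hN
  · simp
  · have hN' : (0 : ℝ) < N := Nat.cast_pos.2 hN
    rw [div_le_iff₀ (by positivity)]
    calc (∑ n ∈ Icc 1 N, |g n|) ^ 2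
        ≤ N * ∑ x ∈ Icc 1 N, (condExpPart N (splitBySign π g) f x - condExpPart N π f x) ^ 2 := hcs
      _ = _ := by field_simp

/-- Energy increment lemma: if `‖f - E(f|B)‖_{U²([N])} ≥ δ` for a partition `B` of
`[N]` into at most `M` cells, then some refinement `B′` with at most `2M` cells has
energy at least `c(δ)` larger. -/
theorem energy_increment (δ : ℝ) (hδ : 0 < δ) :
    ∃ c : ℝ, 0 < c ∧ ∀ (N M : ℕ) (π : ℕ → ℕ) (f : ℕ → ℝ), 0 < N →
      ((Finset.Icc 1 N).image π).card ≤ M →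
      (∀ n ∈ Finset.Icc 1 N, f n ∈ Set.Icc (-1 : ℝ) 1) →
      δ ≤ U2N N (fun n => ((f n - condExpPart N π f n : ℝ) : ℂ)) →
      ∃ π' : ℕ → ℕ,
        (∀ x ∈ Finset.Icc 1 N, ∀ y ∈ Finset.Icc 1 N, π' x = π' y → π x = π y) ∧
        ((Finset.Icc 1 N).image π').card ≤ 2 * M ∧
        c ≤ energy N π' f - energy N π f := by
  refine ⟨(δ ^ 2 / 8) ^ 2, by positivity, fun N M π f hN hM hf hU => ?_⟩
  set g := fun n => f n - condExpPart N π f n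
  refine ⟨splitBySign π g, fun x _ y _ h => (splitBySign_eq_splitBySign_iff.1 h).1,
    (card_image_splitBySign_le π g _).trans (by omega), ?_⟩
  have hf1 : ∀ n ∈ Icc 1 N, |f n| ≤ 1 := fun n hn => abs_le.2 (hf n hn)
  have hg : ∀ n ∈ Icc 1 N, ‖((g n : ℝ) : ℂ)‖ ≤ 2 := fun n hn => by
    rw [Complex.norm_real, Real.norm_eq_abs]
    linarith [abs_sub (f n) (condExpPart N π f n), hf1 n hn,
      abs_condExpPart_le (π := π) zero_le_one hf1 n]
  have hL1 : δ ^ 2 / 8 ≤ (∑ n ∈ Icc 1 N, |g n|) / N := by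
    have h := (pow_le_pow_left₀ hδ.le hU 2).trans (U2N_sq_le hN hg)
    simp only [Complex.norm_real, Real.norm_eq_abs] at h
    linarith
  exact (pow_le_pow_left₀ (by positivity) hL1 2).trans
    (sq_sum_abs_div_le_energy_splitBySign_sub π f)
end

section
/- Decomposition of torus elements: for every d and every growth function F there exists M₀ = M₀(d, F) such that for every θ ∈ 𝕋^d and positive integer N there is M ≤ M₀ and a decomposition θ = θ_smth + θ_rat + θ_irrat where: (1) d(θ_smth, 0) ≤ M/N; (2) qθ_rat = 0 for some positive integer q ≤ M; (3) θ_irrat lies in a subtorus T of 𝕋^d of complexity ≤ M and is (F(M), N)-irrational in T. -/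
open Finset

/-- The quotient Euclidean metric on the torus `𝕋^d = ℝ^d/ℤ^d`. -/
noncomputable def torusDist {d : ℕ} (x y : Fin d → ℝ) : ℝ :=
  ⨅ z : Fin d → ℤ, Real.sqrt (∑ i, (x i - y i - (z i : ℝ)) ^ 2)

/-- `θ ∈ 𝕋^d` is `(A,N)`-irrational: for every nonzero `m ∈ ℤ^d` with `‖m‖₁ ≤ A`,
the distance of `m·θ` to the nearest integer is at least `A/N`. -/
def IsIrrational1 (d : ℕ) (A N : ℝ) (θ : Fin d → ℝ) : Prop :=
  ∀ m : Fin d → ℤ, m ≠ 0 → (∑ i, |(m i : ℝ)|) ≤ A →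
    A / N ≤ |(∑ i, (m i : ℝ) * θ i) - round (∑ i, (m i : ℝ) * θ i)|

/-- A growth function: an increasing function `ℝ⁺ → ℝ⁺`. -/
def Growth (F : ℝ → ℝ) : Prop :=
  (∀ x y, 0 < x → x ≤ y → F x ≤ F y) ∧ ∀ x, 0 < x → 0 < F x

/-! Induction on `d`. If `θ` is `(F 1, N)`-irrational, take `θ_irrat = θ` and `M = 1`.
Otherwise some `m ≠ 0` with `‖m‖₁ ≤ F 1` has `‖m·θ‖ < F 1 / N`. Writing `m = q • (last row of P)`
with `P ∈ SL_d(ℤ)` (Smith normal form; since there are finitely many such `m`, the entries of `P`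
and `P⁻¹` are bounded in terms of `d` and `F 1` only), the last coordinate of `Pθ` lies within
`F 1 / N` of `r / q`, and the other coordinates are decomposed by induction, for the rescaled
growth function `F (c * ·)`. Pulling the decomposition of `Pθ` back along `P⁻¹` multiplies every
complexity by at most the constant `c`. -/

open Matrix

namespace Matrix

section BlockDiagOne

variable {R : Type*} [CommRing R] {n : ℕ}

def blockDiagOne (L : Matrix (Fin n) (Fin n) R) : Matrix (Fin (n + 1)) (Fin (n + 1)) R :=
  reindex finSumFinEquiv finSumFinEquiv (fromBlocks L 0 0 1)

variable (L : Matrix (Fin n) (Fin n) R)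

@[simp]
theorem det_blockDiagOne : (blockDiagOne L).det = L.det := by
  simp [blockDiagOne]

@[simp]
theorem blockDiagOne_castSucc_castSucc (i j : Fin n) :
    blockDiagOne L i.castSucc j.castSucc = L i j := by
  simp [blockDiagOne]

@[simp]
theorem blockDiagOne_castSucc_last (i : Fin n) : blockDiagOne L i.castSucc (Fin.last n) = 0 := by
  simp [blockDiagOne]

@[simp]
theorem blockDiagOne_last_castSucc (j : Fin n) : blockDiagOne L (Fin.last n) j.castSucc = 0 := by
  simp [blockDiagOne]

@[simp]
theorem blockDiagOne_last_last : blockDiagOne L (Fin.last n) (Fin.last n) = 1 := by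
  simp [blockDiagOne]

end BlockDiagOne

theorem map_blockDiagOne_mulVec_snoc_zero {n : ℕ} (L : Matrix (Fin n) (Fin n) ℤ) (v : Fin n → ℝ) :
    (blockDiagOne L).map (↑) *ᵥ (Fin.snoc v 0 : Fin (n + 1) → ℝ) =
      Fin.snoc (L.map (↑) *ᵥ v) 0 := by
  ext i
  induction i using Fin.lastCases <;> simp [mulVec, dotProduct, Fin.sum_univ_castSucc]

theorem map_intCast_mulVec_mulVec {l m : Type*} [Fintype m] [Fintype l] (A : Matrix l m ℤ)
    (B : Matrix m l ℤ) (v : l → ℝ) : A.map (↑) *ᵥ (B.map (↑) *ᵥ v) = (A * B).map (↑) *ᵥ v := by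
  rw [mulVec_mulVec]
  exact congrArg (· *ᵥ v) (Matrix.map_mul (f := Int.castRingHom ℝ)).symm

end Matrix

theorem abs_sum_mul_le {ι : Type*} [Fintype ι] {x y : ι → ℝ} {a b : ℝ} (hx : ∀ i, |x i| ≤ a)
    (hy : ∀ i, |y i| ≤ b) : |∑ i, x i * y i| ≤ Fintype.card ι * (a * b) := calc
  |∑ i, x i * y i| ≤ ∑ i, |x i * y i| := abs_sum_le_sum_abs _ _
  _ ≤ ∑ _i : ι, a * b := sum_le_sum fun i _ ↦ by
    rw [abs_mul]
    exact mul_le_mul (hx i) (hy i) (abs_nonneg _) ((abs_nonneg _).trans (hx i))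
  _ = Fintype.card ι * (a * b) := by simp

theorem exists_isUnit_det_eq_smul_lastRow {n : ℕ} {m : Fin (n + 1) → ℤ} (hm : m ≠ 0) :
    ∃ (q : ℤ) (P : Matrix (Fin (n + 1)) (Fin (n + 1)) ℤ),
      IsUnit P.det ∧ m = q • P (Fin.last n) := by
  -- In a Smith basis of `ℤ^(n+1)` adapted to the rank one submodule `ℤ ∙ m`, `m` is a multiple
  -- of one basis vector; the basis vectors, reordered to put that one last, are the rows of `P`.
  obtain ⟨k, snf⟩ := Submodule.smithNormalForm (Pi.basisFun ℤ (Fin (n + 1))) (ℤ ∙ m)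
  have hk : k = 1 := by
    simpa using (Module.finrank_eq_card_basis snf.bN).symm.trans
      (LinearEquiv.toSpanNonzeroSingleton ℤ _ m hm).finrank_eq.symm
  subst hk
  let b := snf.bM.reindex (Equiv.swap (snf.f 0) (Fin.last n))
  let m' : ℤ ∙ m := ⟨m, Submodule.mem_span_singleton_self m⟩
  refine ⟨snf.bN.repr m' 0 * snf.a 0, Matrix.of b, ?_, ?_⟩
  · have hmat : (Pi.basisFun ℤ (Fin (n + 1))).toMatrix b = (Matrix.of b)ᵀ := by
      ext i j; simp [Module.Basis.toMatrix_apply]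
    have := (Pi.basisFun ℤ (Fin (n + 1))).isUnit_det b
    rwa [Module.Basis.det_apply, hmat, det_transpose] at this
  · have hm' : m' = snf.bN.repr m' 0 • snf.bN 0 := by
      simpa using (snf.bN.sum_repr m').symm
    have hlast : b (Fin.last n) = snf.bM (snf.f 0) := by
      simp [b, Module.Basis.reindex_apply]
    change m = _ • b (Fin.last n)
    rw [hlast, mul_smul, ← snf.snf, ← SetLike.val_smul, ← hm']

theorem exists_det_eq_one_eq_smul_lastRow {n : ℕ} {m : Fin (n + 1) → ℤ} (hm : m ≠ 0) :
    ∃ (q : ℤ) (P : Matrix (Fin (n + 1)) (Fin (n + 1)) ℤ),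
      P.det = 1 ∧ m = q • P (Fin.last n) := by
  obtain ⟨q, P, hP, rfl⟩ := exists_isUnit_det_eq_smul_lastRow hm
  rcases Int.isUnit_iff.1 hP with h | h
  · exact ⟨q, P, h, rfl⟩
  · refine ⟨-q, P.updateRow (Fin.last n) (-P (Fin.last n)), ?_, ?_⟩
    · rw [← neg_one_smul ℤ (P _), det_updateRow_smul, updateRow_eq_self, h]
      norm_num
    · rw [updateRow_self, neg_smul_neg]

theorem exists_bound_det_eq_one_eq_smul_lastRow (n : ℕ) (B : ℤ) :
    ∃ C : ℝ, 1 ≤ C ∧ ∀ m : Fin (n + 1) → ℤ, m ≠ 0 → (∀ i, |m i| ≤ B) →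
      ∃ (q : ℤ) (P : Matrix (Fin (n + 1)) (Fin (n + 1)) ℤ),
        P.det = 1 ∧ m = q • P (Fin.last n) ∧
          ∀ i j, (|P i j| : ℝ) ≤ C ∧ (|P.adjugate i j| : ℝ) ≤ C := by
  let S := {m : Fin (n + 1) → ℤ | m ≠ 0 ∧ ∀ i, |m i| ≤ B}
  have hS : S.Finite := (Set.finite_Icc (fun _ ↦ -B) (fun _ ↦ B)).subset
    fun m hm ↦ ⟨fun i ↦ (abs_le.1 (hm.2 i)).1, fun i ↦ (abs_le.1 (hm.2 i)).2⟩
  have := hS.to_subtype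
  choose q P hP using fun m : S ↦ exists_det_eq_one_eq_smul_lastRow m.2.1
  obtain ⟨C, hC⟩ := Finite.exists_le fun x : S × Fin (n + 1) × Fin (n + 1) ↦
    max (|P x.1 x.2.1 x.2.2| : ℝ) |(P x.1).adjugate x.2.1 x.2.2|
  refine ⟨max C 1, le_max_right _ _, fun m hm hmB ↦ ?_⟩
  let m' : S := ⟨m, hm, hmB⟩
  refine ⟨q m', P m', (hP m').1, (hP m').2, fun i j ↦ ?_⟩
  have hij := max_le_iff.1 (hC (m', i, j))
  exact ⟨le_max_of_le_left hij.1, le_max_of_le_left hij.2⟩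

theorem exists_bounded_unimodular_of_not_isIrrational1 (n : ℕ) (K : ℝ) :
    ∃ C : ℝ, 1 ≤ C ∧ ∀ (θ : Fin (n + 1) → ℝ) (N : ℝ), ¬ IsIrrational1 (n + 1) K N θ →
      ∃ P : Matrix (Fin (n + 1)) (Fin (n + 1)) ℤ, P.det = 1 ∧
        (∀ i j, (|P i j| : ℝ) ≤ C ∧ (|P.adjugate i j| : ℝ) ≤ C) ∧
        ∃ q : ℕ, 0 < q ∧ (q : ℝ) ≤ K ∧
          ∃ r : ℤ, |q * (P.map (↑) *ᵥ θ) (Fin.last n) - r| ≤ K / N := by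
  obtain ⟨C, hC1, hC⟩ := exists_bound_det_eq_one_eq_smul_lastRow n ⌈K⌉
  refine ⟨C, hC1, fun θ N hθ ↦ ?_⟩
  simp only [IsIrrational1, not_forall, not_le, exists_prop] at hθ
  obtain ⟨m, hm, hmK, hmθ⟩ := hθ
  have hmi : ∀ i, |(m i : ℝ)| ≤ K := fun i ↦
    (single_le_sum (fun j _ ↦ abs_nonneg (m j : ℝ)) (mem_univ i)).trans hmK
  obtain ⟨q, P, hdet, rfl, hPC⟩ := hC m hm fun i ↦ by
    exact_mod_cast (hmi i).trans (Int.le_ceil K)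
  obtain ⟨j, hj⟩ := Function.ne_iff.1 hm
  have hqK : |(q : ℝ)| ≤ K := calc
    |(q : ℝ)| ≤ |(q : ℝ)| * |(P (Fin.last n) j : ℝ)| := by
      refine le_mul_of_one_le_right (abs_nonneg _) ?_
      have : P (Fin.last n) j ≠ 0 := fun h ↦ hj (by simp [h])
      exact_mod_cast Int.one_le_abs this
    _ ≤ K := by simpa [abs_mul] using hmi j
  have hq : q ≠ 0 := fun h ↦ hj (by simp [h])
  have hdot :
      ∑ i, ((q • P (Fin.last n)) i : ℝ) * θ i = q * (P.map (↑) *ᵥ θ) (Fin.last n) := by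
    simp [mulVec, dotProduct, mul_sum, mul_assoc]
  rw [hdot] at hmθ
  -- `det P = 1` leaves no freedom for the sign of `q`: pass to `|q|` and flip `r` if needed.
  refine ⟨P, hdet, hPC, q.natAbs, Int.natAbs_pos.2 hq,
    by rwa [Nat.cast_natAbs, Int.cast_abs], ?_⟩
  rw [Nat.cast_natAbs, Int.cast_abs]
  rcases abs_choice (q : ℝ) with h | h
  · exact ⟨_, by rw [h]; exact hmθ.le⟩
  · refine ⟨-round ((q : ℝ) * (P.map (↑) *ᵥ θ) (Fin.last n)), ?_⟩
    rw [h, Int.cast_neg, ← abs_neg]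
    exact (congrArg abs (by ring)).trans_le hmθ.le

section Decomposition

variable {d : ℕ}

-- `θ_smth` is measured by its sup distance to `ℤ^d`, which integer matrices distort boundedly;
-- `IsNearIntegral.torusDist_le` converts to `torusDist` at the end.
def IsNearIntegral (S : ℝ) (x : Fin d → ℝ) : Prop :=
  ∃ z : Fin d → ℤ, ∀ i, |x i - z i| ≤ S

def IsRational (M : ℝ) (x : Fin d → ℝ) : Prop :=
  ∃ q : ℕ, 0 < q ∧ (q : ℝ) ≤ M ∧ ∀ i, ∃ k : ℤ, (q : ℝ) * x i = k

def IsIrrationalInSubtorus (A M N : ℝ) (x : Fin d → ℝ) : Prop :=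
  ∃ (d' : ℕ) (hd' : d' ≤ d) (L : Matrix (Fin d) (Fin d) ℤ),
    L.det = 1 ∧ (∀ i j, (|L i j| : ℝ) ≤ M) ∧
    (∀ i : Fin d, d' ≤ (i : ℕ) → ∃ k : ℤ, (L.map (↑) *ᵥ x) i = k) ∧
    IsIrrational1 d' A N (fun i' ↦ (L.map (↑) *ᵥ x) (Fin.castLE hd' i'))

def IsTorusDecomposition (A M : ℝ) (N : ℕ) (θ θs θr θi : Fin d → ℝ) : Prop :=
  θ = θs + θr + θi ∧ IsNearIntegral (M / N) θs ∧ IsRational M θr ∧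
    IsIrrationalInSubtorus A M N θi

variable {A M M' S S' : ℝ} {x : Fin d → ℝ}

theorem IsNearIntegral.mono (h : IsNearIntegral S x) (hS : S ≤ S') : IsNearIntegral S' x :=
  let ⟨z, hz⟩ := h
  ⟨z, fun i ↦ (hz i).trans hS⟩

theorem IsRational.mono (h : IsRational M x) (hM : M ≤ M') : IsRational M' x :=
  let ⟨q, hq, hqM, hx⟩ := h
  ⟨q, hq, hqM.trans hM, hx⟩

theorem IsRational.one_le (h : IsRational M x) : 1 ≤ M :=
  let ⟨_, hq, hqM, _⟩ := h
  le_trans (by exact_mod_cast hq) hqM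

theorem IsIrrationalInSubtorus.mono {N : ℝ} (h : IsIrrationalInSubtorus A M N x)
    (hM : M ≤ M') : IsIrrationalInSubtorus A M' N x :=
  let ⟨d', hd', L, hdet, hL, hint, hirr⟩ := h
  ⟨d', hd', L, hdet, fun i j ↦ (hL i j).trans hM, hint, hirr⟩

theorem IsNearIntegral.torusDist_le (h : IsNearIntegral S x) : torusDist x 0 ≤ d * S := by
  obtain ⟨z, hz⟩ := h
  have hbdd : BddBelow (Set.range fun z : Fin d → ℤ ↦
      Real.sqrt (∑ i, (x i - (0 : Fin d → ℝ) i - (z i : ℝ)) ^ 2)) :=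
    ⟨0, by rintro _ ⟨z, rfl⟩; exact Real.sqrt_nonneg _⟩
  calc torusDist x 0 ≤ Real.sqrt (∑ i, (x i - z i) ^ 2) := by
        simpa [torusDist] using ciInf_le hbdd z
    _ ≤ ∑ i, |x i - z i| := by
        refine Real.sqrt_le_iff.2 ⟨sum_nonneg fun i _ ↦ abs_nonneg _, ?_⟩
        simpa only [sq_abs] using sum_sq_le_sq_sum_of_nonneg fun i _ ↦ abs_nonneg (x i - z i)
    _ ≤ ∑ _i : Fin d, S := sum_le_sum fun i _ ↦ hz i
    _ = d * S := by simp

theorem IsNearIntegral.snoc (h : IsNearIntegral S x) {a : ℝ} (ha : |a| ≤ S) :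
    IsNearIntegral S (Fin.snoc x a : Fin (d + 1) → ℝ) :=
  let ⟨z, hz⟩ := h
  ⟨Fin.snoc z 0, fun i ↦ by induction i using Fin.lastCases <;> simp [hz, ha]⟩

theorem IsRational.snoc (h : IsRational M x) {q : ℕ} (hq : 0 < q) (k : ℤ) :
    IsRational (q * M) (Fin.snoc x (k / q) : Fin (d + 1) → ℝ) := by
  obtain ⟨q', hq', hq'M, hx⟩ := h
  refine ⟨q * q', Nat.mul_pos hq hq', by push_cast; gcongr, fun i ↦ ?_⟩
  induction i using Fin.lastCases with
  | last =>
    have hq0 : (q : ℝ) ≠ 0 := by positivity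
    exact ⟨q' * k, by push_cast; rw [Fin.snoc_last]; field_simp⟩
  | cast i =>
    obtain ⟨k, hk⟩ := hx i
    exact ⟨q * k, by push_cast; rw [Fin.snoc_castSucc, mul_assoc, hk]⟩

theorem IsIrrationalInSubtorus.snoc_zero {N : ℝ} (h : IsIrrationalInSubtorus A M N x)
    (hM : 1 ≤ M) : IsIrrationalInSubtorus A M N (Fin.snoc x 0 : Fin (d + 1) → ℝ) := by
  obtain ⟨d', hd', L, hdet, hL, hint, hirr⟩ := h
  refine ⟨d', hd'.trans d.le_succ, blockDiagOne L, by rw [det_blockDiagOne, hdet], ?_, ?_, ?_⟩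
  · intro i j
    induction i using Fin.lastCases <;> induction j using Fin.lastCases <;>
      simp [hL, hM, zero_le_one.trans hM]
  · intro i hi
    rw [map_blockDiagOne_mulVec_snoc_zero]
    induction i using Fin.lastCases with
    | last => exact ⟨0, by simp⟩
    | cast i => simpa using hint i (by simpa using hi)
  · have hcast (i' : Fin d') :
        Fin.castLE (hd'.trans d.le_succ) i' = (Fin.castLE hd' i').castSucc := rfl
    simpa only [map_blockDiagOne_mulVec_snoc_zero, hcast, Fin.snoc_castSucc] using hirr

theorem IsNearIntegral.mulVec (h : IsNearIntegral S x) {Q : Matrix (Fin d) (Fin d) ℤ} {C : ℝ}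
    (hQ : ∀ i j, (|Q i j| : ℝ) ≤ C) : IsNearIntegral (d * (C * S)) (Q.map (↑) *ᵥ x) := by
  obtain ⟨z, hz⟩ := h
  refine ⟨Q *ᵥ z, fun i ↦ ?_⟩
  have hsub : (Q.map (↑) *ᵥ x) i - ((Q *ᵥ z) i : ℝ) = ∑ j, (Q i j : ℝ) * (x j - z j) := by
    simp [Matrix.mulVec, dotProduct, mul_sub]
  simpa [hsub] using abs_sum_mul_le (hQ i) hz

theorem IsRational.mulVec (h : IsRational M x) (Q : Matrix (Fin d) (Fin d) ℤ) :
    IsRational M (Q.map (↑) *ᵥ x) := by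
  obtain ⟨q, hq, hqM, hx⟩ := h
  choose k hk using hx
  refine ⟨q, hq, hqM, fun i ↦ ⟨(Q *ᵥ k) i, ?_⟩⟩
  simp [Matrix.mulVec, dotProduct, mul_sum, mul_left_comm (q : ℝ), hk]

theorem IsIrrationalInSubtorus.adjugate_mulVec {N : ℝ} (h : IsIrrationalInSubtorus A M N x)
    {P : Matrix (Fin d) (Fin d) ℤ} (hP : P.det = 1) {C : ℝ} (hPC : ∀ i j, (|P i j| : ℝ) ≤ C) :
    IsIrrationalInSubtorus A (d * (M * C)) N (P.adjugate.map (↑) *ᵥ x) := by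
  obtain ⟨d', hd', L, hdet, hL, hint, hirr⟩ := h
  have hLx : (L * P).map (↑) *ᵥ (P.adjugate.map (↑) *ᵥ x) = L.map (↑) *ᵥ x := by
    rw [map_intCast_mulVec_mulVec, mul_assoc, mul_adjugate, hP, one_smul, mul_one]
  refine ⟨d', hd', L * P, by rw [det_mul, hdet, hP, one_mul], fun i j ↦ ?_, ?_, ?_⟩
  · simpa [mul_apply] using abs_sum_mul_le (hL i) (fun k ↦ hPC k j)
  · simpa only [hLx] using hint
  · simpa only [hLx] using hirr

theorem isTorusDecomposition_of_isIrrational1 {N : ℕ} {θ : Fin d → ℝ}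
    (h : IsIrrational1 d A N θ) : IsTorusDecomposition A 1 N θ 0 0 θ := by
  refine ⟨by simp, ⟨0, fun i ↦ by simp⟩, ⟨1, one_pos, by simp, fun i ↦ ⟨0, by simp⟩⟩,
    ⟨d, le_rfl, 1, det_one, fun i j ↦ ?_, fun i hi ↦ absurd i.2 (by omega), by simpa using h⟩⟩
  rw [one_apply]
  split_ifs <;> simp

theorem IsTorusDecomposition.mono {N : ℕ} {θ θs θr θi : Fin d → ℝ}
    (h : IsTorusDecomposition A M N θ θs θr θi) (hM : M ≤ M') :
    IsTorusDecomposition A M' N θ θs θr θi :=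
  ⟨h.1, h.2.1.mono (by gcongr), h.2.2.1.mono hM, h.2.2.2.mono hM⟩

theorem IsTorusDecomposition.snoc {N : ℕ} {ψ ψs ψr ψi : Fin d → ℝ}
    (h : IsTorusDecomposition A M N ψ ψs ψr ψi) {x K : ℝ} {q : ℕ} {r : ℤ} (hq : 0 < q)
    (hqK : (q : ℝ) ≤ K) (hx : |q * x - r| ≤ K / N) :
    IsTorusDecomposition A (K * M) N (Fin.snoc ψ x) (Fin.snoc ψs (x - r / q))
      (Fin.snoc ψr (r / q)) (Fin.snoc ψi 0) := by
  obtain ⟨hsum, hs, hr, hi⟩ := h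
  have hM := hr.one_le
  have hq1 : (1 : ℝ) ≤ q := by exact_mod_cast hq
  have hx' : |x - r / q| ≤ K * M / N := calc
    |x - r / q| = |q * x - r| / q := by
      have hq0 : (0 : ℝ) < q := zero_lt_one.trans_le hq1
      rw [← abs_of_pos hq0, ← abs_div, abs_of_pos hq0]
      congr 1
      field_simp
    _ ≤ K / N := (div_le_self (abs_nonneg _) hq1).trans hx
    _ ≤ K * M / N :=
      div_le_div_of_nonneg_right (le_mul_of_one_le_right (by linarith) hM) N.cast_nonneg
  refine ⟨?_, (hs.mono ?_).snoc hx', (hr.snoc hq r).mono (by gcongr), (hi.snoc_zero hM).mono ?_⟩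
  · ext i
    induction i using Fin.lastCases <;> simp [hsum]
  · gcongr
    exact le_mul_of_one_le_left (by linarith) (hq1.trans hqK)
  · exact le_mul_of_one_le_left (by linarith) (hq1.trans hqK)

theorem IsTorusDecomposition.adjugate_mulVec {N : ℕ} {θ φs φr φi : Fin (d + 1) → ℝ}
    {P : Matrix (Fin (d + 1)) (Fin (d + 1)) ℤ}
    (h : IsTorusDecomposition A M N (P.map (↑) *ᵥ θ) φs φr φi) (hP : P.det = 1) {C : ℝ}
    (hC : 1 ≤ C) (hPC : ∀ i j, (|P i j| : ℝ) ≤ C ∧ (|P.adjugate i j| : ℝ) ≤ C) :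
    IsTorusDecomposition A ((d + 1) * C * M) N θ (P.adjugate.map (↑) *ᵥ φs)
      (P.adjugate.map (↑) *ᵥ φr) (P.adjugate.map (↑) *ᵥ φi) := by
  obtain ⟨hsum, hs, hr, hi⟩ := h
  have hM := hr.one_le
  refine ⟨?_, (hs.mulVec fun i j ↦ (hPC i j).2).mono (le_of_eq (by push_cast; ring)),
    (hr.mulVec _).mono ?_, (hi.adjugate_mulVec hP fun i j ↦ (hPC i j).1).mono
      (le_of_eq (by push_cast; ring))⟩
  · rw [← mulVec_add, ← mulVec_add, ← hsum, map_intCast_mulVec_mulVec, adjugate_mul, hP,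
      one_smul, Matrix.map_one _ Int.cast_zero Int.cast_one, one_mulVec]
  · have : (1 : ℝ) ≤ (d + 1) * C := one_le_mul_of_one_le_of_one_le (by linarith) hC
    nlinarith

end Decomposition

theorem exists_isTorusDecomposition (d : ℕ) (F : ℝ → ℝ) :
    ∃ M₀ : ℝ, ∀ (θ : Fin d → ℝ) (N : ℕ), ∃ (M : ℝ) (θs θr θi : Fin d → ℝ),
      1 ≤ M ∧ M ≤ M₀ ∧ IsTorusDecomposition (F M) M N θ θs θr θi := by
  induction d generalizing F with
  | zero =>
    refine ⟨1, fun θ N ↦ ⟨1, 0, 0, θ, le_rfl, le_rfl, ?_⟩⟩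
    exact isTorusDecomposition_of_isIrrational1 fun m hm ↦ absurd (Subsingleton.elim m 0) hm
  | succ d ih =>
    obtain ⟨C, hC, hres⟩ := exists_bounded_unimodular_of_not_isIrrational1 d (F 1)
    -- `c` bounds the growth of the complexity under `snoc` and the pull-back along `P⁻¹`;
    -- rescaling `F` by it makes the irrationality level come out as `F` of the new complexity.
    set c := (d + 1) * C * F 1
    obtain ⟨M₀, hM₀⟩ := ih fun M ↦ F (c * M)
    refine ⟨max 1 (c * M₀), fun θ N ↦ ?_⟩
    by_cases hθ : IsIrrational1 (d + 1) (F 1) N θ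
    · exact ⟨1, 0, 0, θ, le_rfl, le_max_left _ _, isTorusDecomposition_of_isIrrational1 hθ⟩
    obtain ⟨P, hP, hPC, q, hq, hqF, r, hr⟩ := hres θ N hθ
    obtain ⟨M, φs, φr, φi, hM, hMM₀, hφ⟩ := hM₀ (Fin.init (P.map (↑) *ᵥ θ)) N
    have hsnoc := hφ.snoc hq hqF hr
    rw [Fin.snoc_init_self] at hsnoc
    have hc : 1 ≤ c := one_le_mul_of_one_le_of_one_le
      (one_le_mul_of_one_le_of_one_le (le_add_of_nonneg_left d.cast_nonneg) hC)
      (le_trans (by exact_mod_cast hq) hqF)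
    have hdec := hsnoc.adjugate_mulVec hP hC hPC
    rw [show (d + 1 : ℝ) * C * (F 1 * M) = c * M by ring] at hdec
    exact ⟨c * M, _, _, _, one_le_mul_of_one_le_of_one_le hc hM,
      le_max_of_le_right (mul_le_mul_of_nonneg_left hMM₀ (by linarith)), hdec⟩

theorem torus_decomposition_general (d : ℕ) (F : ℝ → ℝ) :
    ∃ M₀ : ℝ, ∀ (θ : Fin d → ℝ) (N : ℕ), 0 < N →
      ∃ (M : ℝ) (θs θr θi : Fin d → ℝ), 0 < M ∧ M ≤ M₀ ∧
        (∀ i, θ i = θs i + θr i + θi i) ∧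
        torusDist θs 0 ≤ M / N ∧
        (∃ q : ℕ, 0 < q ∧ (q : ℝ) ≤ M ∧ ∀ i, ∃ k : ℤ, (q : ℝ) * θr i = k) ∧
        (∃ (d' : ℕ) (hd' : d' ≤ d) (L : Matrix (Fin d) (Fin d) ℤ),
          L.det = 1 ∧ (∀ i j, (|L i j| : ℝ) ≤ M) ∧
          (∀ i : Fin d, d' ≤ (i : ℕ) → ∃ k : ℤ, (∑ j, (L i j : ℝ) * θi j) = k) ∧
          IsIrrational1 d' (F M) N
            (fun i' : Fin d' => ∑ j, (L (Fin.castLE hd' i') j : ℝ) * θi j)) := by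
  obtain ⟨M₀, hM₀⟩ := exists_isTorusDecomposition d fun M ↦ F ((d + 1) * M)
  refine ⟨(d + 1) * M₀, fun θ N _ ↦ ?_⟩
  obtain ⟨M, θs, θr, θi, hM, hMM₀, hsum, hs, hr, hi⟩ := hM₀ θ N
  have hle : M ≤ (d + 1) * M :=
    le_mul_of_one_le_left (by linarith) (le_add_of_nonneg_left d.cast_nonneg)
  refine ⟨(d + 1) * M, θs, θr, θi, by positivity, by gcongr, fun i ↦ congrFun hsum i, ?_,
    hr.mono hle, hi.mono hle⟩
  calc torusDist θs 0 ≤ d * (M / N) := hs.torusDist_le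
    _ ≤ (d + 1) * M / N := by rw [mul_div_assoc]; gcongr; linarith

/-- Decomposition of torus elements: every `θ ∈ 𝕋^d` splits, for some `M ≤ M₀(d,F)`,
as `θ = θ_smth + θ_rat + θ_irrat`, where `θ_smth` is `(M,N)`-smooth, `θ_rat` is
`M`-rational, and `θ_irrat` lies in a subtorus `T = L⁻¹(𝕋^{d'} × {0})` of complexity
at most `M` (given by `L ∈ SL_d(ℤ)` with entries of absolute value at most `M`)
and is `(F(M),N)`-irrational in `T`. -/
theorem torus_decomposition (d : ℕ) (F : ℝ → ℝ) (hF : Growth F) :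
    ∃ M₀ : ℝ, ∀ (θ : Fin d → ℝ) (N : ℕ), 0 < N →
      ∃ (M : ℝ) (θs θr θi : Fin d → ℝ), 0 < M ∧ M ≤ M₀ ∧
        (∀ i, θ i = θs i + θr i + θi i) ∧
        torusDist θs 0 ≤ M / N ∧
        (∃ q : ℕ, 0 < q ∧ (q : ℝ) ≤ M ∧ ∀ i, ∃ k : ℤ, (q : ℝ) * θr i = k) ∧
        (∃ (d' : ℕ) (hd' : d' ≤ d) (L : Matrix (Fin d) (Fin d) ℤ),
          L.det = 1 ∧ (∀ i j, (|L i j| : ℝ) ≤ M) ∧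
          (∀ i : Fin d, d' ≤ (i : ℕ) → ∃ k : ℤ, (∑ j, (L i j : ℝ) * θi j) = k) ∧
          IsIrrational1 d' (F M) N
            (fun i' : Fin d' => ∑ j, (L (Fin.castLE hd' i') j : ℝ) * θi j)) :=
  torus_decomposition_general d F
end

section
/- If θ ∈ 𝕋^d is (A,N)-irrational and m ∈ ℤ^d \ {0} with ‖m‖₁·|h| ≤ A for a nonzero integer h, then for any arithmetic progression P ⊆ {1,…,N} with common difference h, |E_{n∈P} e(m·θn)| ≤ C·N/(|P|·A) for an absolute constant C. -/
open Finset Complex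

/-!
Along the progression `n = a + jh` the phase `e(m·θ n)` is the constant `e(m·θ a)` times
`e(α j)` with `α = (m·θ) h = (hm)·θ`. Since `‖hm‖₁ ≤ A`, irrationality gives `‖α‖_{ℝ/ℤ} ≥ A/N`,
and the geometric series bound `|∑_{j<L} e(αj)| ≤ 1/(2‖α‖_{ℝ/ℤ})`, which comes from
`|e(α) - 1| = 2|sin πα| ≥ 4‖α‖_{ℝ/ℤ}`, yields the claim with `C = 1/2`.
-/

lemma two_mul_abs_sub_round_le_abs_sin_pi_mul (x : ℝ) :
    2 * |x - round x| ≤ |Real.sin (Real.pi * x)| := by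
  have hshift : Real.sin (Real.pi * x) =
      (-1 : ℝ) ^ round x * Real.sin (Real.pi * (x - round x)) := by
    rw [← Real.sin_add_int_mul_pi]; ring_nf
  have hsmall : |Real.pi * (x - round x)| ≤ Real.pi / 2 := by
    rw [abs_mul, abs_of_pos Real.pi_pos]; nlinarith [abs_sub_round x, Real.pi_pos]
  calc 2 * |x - round x| = 2 / Real.pi * |Real.pi * (x - round x)| := by
        rw [abs_mul, abs_of_pos Real.pi_pos]; field_simp
    _ ≤ |Real.sin (Real.pi * (x - round x))| := Real.mul_abs_le_abs_sin hsmall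
    _ = |Real.sin (Real.pi * x)| := by rw [hshift, abs_mul, abs_neg_one_zpow, one_mul]

lemma norm_exp_two_pi_mul_I_sub_one (x : ℝ) :
    ‖exp (2 * Real.pi * x * I) - 1‖ = 2 * |Real.sin (Real.pi * x)| := by
  have := norm_exp_I_mul_ofReal_sub_one (2 * Real.pi * x)
  push_cast at this
  rw [mul_comm, this, norm_mul, Real.norm_two, Real.norm_eq_abs]
  ring_nf

lemma norm_sum_range_exp_le_of_le_abs_sub_round {α δ : ℝ} (hδ : 0 < δ)
    (hα : δ ≤ |α - round α|) (L : ℕ) :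
    ‖∑ j ∈ range L, exp (2 * Real.pi * I * α * j)‖ ≤ 1 / (2 * δ) := by
  set z := exp (2 * Real.pi * α * I)
  have hpow : ∀ j : ℕ, exp (2 * Real.pi * I * α * j) = z ^ j := fun j => by
    rw [← exp_nat_mul]; ring_nf
  have hz : ‖z‖ = 1 := by simpa using norm_exp_ofReal_mul_I (2 * Real.pi * α)
  have hnum : ‖z ^ L - 1‖ ≤ 2 := by
    simpa [hz, one_add_one_eq_two] using norm_sub_le (z ^ L) 1
  have hden : 4 * δ ≤ ‖z - 1‖ := by
    rw [norm_exp_two_pi_mul_I_sub_one]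
    linarith [two_mul_abs_sub_round_le_abs_sin_pi_mul α]
  simp_rw [hpow]
  rw [le_div_iff₀ (by positivity)]
  calc ‖∑ j ∈ range L, z ^ j‖ * (2 * δ) ≤ ‖∑ j ∈ range L, z ^ j‖ * (‖z - 1‖ / 2) := by
        gcongr; linarith
    _ = ‖z ^ L - 1‖ / 2 := by rw [← geom_sum_mul, norm_mul]; ring
    _ ≤ 1 := by linarith

lemma norm_sum_range_exp_affine (β a h : ℝ) (L : ℕ) :
    ‖∑ j ∈ range L, exp (2 * Real.pi * I * β * (a + j * h : ℝ))‖ =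
      ‖∑ j ∈ range L, exp (2 * Real.pi * I * (β * h : ℝ) * j)‖ := by
  have hsplit : ∀ j : ℕ, exp (2 * Real.pi * I * β * (a + j * h : ℝ)) =
      exp ((2 * Real.pi * β * a : ℝ) * I) * exp (2 * Real.pi * I * (β * h : ℝ) * j) :=
    fun j => by rw [← exp_add]; push_cast; ring_nf
  simp_rw [hsplit, ← mul_sum, norm_mul, norm_exp_ofReal_mul_I, one_mul]

lemma one_le_sum_abs_of_ne_zero {ι : Type*} [Fintype ι] {m : ι → ℤ} (hm : m ≠ 0) :
    1 ≤ ∑ i, |(m i : ℝ)| := by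
  obtain ⟨i, hi⟩ := Function.ne_iff.mp hm
  calc (1 : ℝ) ≤ |(m i : ℝ)| := by exact_mod_cast Int.one_le_abs hi
    _ ≤ ∑ i, |(m i : ℝ)| := single_le_sum (fun i _ => abs_nonneg (m i : ℝ)) (mem_univ i)

lemma IsIrrational1.le_abs_sub_round_mul {d : ℕ} {A N : ℝ} {θ : Fin d → ℝ}
    (hθ : IsIrrational1 d A N θ) {m : Fin d → ℤ} (hm : m ≠ 0) {h : ℤ} (hh : h ≠ 0)
    (hA : (∑ i, |(m i : ℝ)|) * |(h : ℝ)| ≤ A) :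
    A / N ≤ |(∑ i, (m i : ℝ) * θ i) * h - round ((∑ i, (m i : ℝ) * θ i) * h)| := by
  have hdot : ∑ i, ((h • m) i : ℝ) * θ i = (∑ i, (m i : ℝ) * θ i) * h := by
    simp only [Pi.smul_apply, smul_eq_mul, Int.cast_mul, sum_mul]
    exact sum_congr rfl fun i _ => by ring
  have hnorm : ∑ i, |((h • m) i : ℝ)| = (∑ i, |(m i : ℝ)|) * |(h : ℝ)| := by
    simp only [Pi.smul_apply, smul_eq_mul, Int.cast_mul, abs_mul, sum_mul]
    exact sum_congr rfl fun i _ => by ring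
  simpa only [hdot] using hθ (h • m) (smul_ne_zero hh hm) (hnorm.trans_le hA)

/-- Exponential sums of `e(m·θ n)` over an arithmetic progression
`P = {a + jh : 0 ≤ j < L} ⊆ {1,…,N}` are small when `θ` is `(A,N)`-irrational,
`m ≠ 0` and `‖m‖₁ |h| ≤ A`: `|E_{n ∈ P} e(m·θ n)| ≤ C N/(|P| A)`. -/
theorem exp_sum_progression_bound :
    ∃ C : ℝ, 0 < C ∧ ∀ (d N : ℕ) (A : ℝ) (θ : Fin d → ℝ) (m : Fin d → ℤ)
      (h a : ℤ) (L : ℕ), 0 < N → 0 < L →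
      IsIrrational1 d A N θ → m ≠ 0 → h ≠ 0 →
      (∑ i, |(m i : ℝ)|) * |(h : ℝ)| ≤ A →
      (∀ j : ℕ, j < L → 1 ≤ a + j * h ∧ a + j * h ≤ N) →
      ‖(1 / (L : ℂ)) * ∑ j ∈ Finset.range L,
          Complex.exp (2 * Real.pi * Complex.I *
            (∑ i, (m i : ℝ) * θ i) * ((a : ℝ) + j * h))‖ ≤ C * N / (L * A) := by
  refine ⟨1 / 2, by norm_num, fun d N A θ m h a L hN hL hθ hm hh hA _ => ?_⟩
  have hA_pos : 0 < A := by
    have := one_le_sum_abs_of_ne_zero hm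
    have : (1 : ℝ) ≤ |(h : ℝ)| := by exact_mod_cast Int.one_le_abs hh
    nlinarith
  have hN_pos : (0 : ℝ) < N := by exact_mod_cast hN
  have hgeom := norm_sum_range_exp_le_of_le_abs_sub_round (div_pos hA_pos hN_pos)
    (hθ.le_abs_sub_round_mul hm hh hA) L
  have haffine := norm_sum_range_exp_affine (∑ i, (m i : ℝ) * θ i) a h L
  rw [norm_mul, norm_div, norm_one, norm_natCast]
  push_cast at hgeom haffine ⊢
  rw [haffine]
  calc 1 / (L : ℝ) * _ ≤ 1 / L * (1 / (2 * (A / N))) := by gcongr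
    _ = 1 / 2 * N / (L * A) := by field_simp
end

section
/- Fourier truncation for Lipschitz functions on the torus: for every d, M, δ > 0 there exists M₀ = M₀(d, M, δ) and coefficients c_m ∈ ℂ for m ∈ ℤ^d with ‖m‖₁ ≤ M₀, satisfying c₀ = ∫_{𝕋^d} F dμ and |c_m| = O_{M,d}(1), such that |F(x) - Σ_{‖m‖₁ ≤ M₀} c_m e(m·x)| ≤ δ for all x ∈ 𝕋^d, whenever F : 𝕋^d → ℂ has Lipschitz constant at most M. -/
open Finset Complex MeasureTheory

/-!
By Arzelà–Ascoli, the `K`-Lipschitz functions `𝕋^d → ℂ` bounded by `K` form a compact subset of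
`C(𝕋^d, ℂ)`, and by Stone–Weierstrass trigonometric polynomials are dense there, so finitely many
trigonometric polynomials form a `δ/2`-net of it; their frequencies and coefficients give `M₀`
and `B`. A function `F` as in the theorem descends to an `M√d`-Lipschitz function on `𝕋^d`, which
after subtracting `F 0` lies in that compact set. Replacing the constant term of the approximant
by `∫ F` shifts the error by its own mean, so at most doubles it.
-/

open scoped NNReal
open UnitAddTorus

theorem Function.Surjective.exists_lipschitzWith_comp_eq {X Y E : Type*} [PseudoMetricSpace Y]
    [MetricSpace E] {π : X → Y} (hπ : Function.Surjective π) {K : ℝ≥0} {F : X → E}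
    (hF : ∀ x y, dist (F x) (F y) ≤ K * dist (π x) (π y)) :
    ∃ G : Y → E, LipschitzWith K G ∧ G ∘ π = F := by
  refine ⟨F ∘ Function.surjInv hπ, .of_dist_le_mul fun a b => ?_, funext fun x => ?_⟩
  · simpa [Function.surjInv_eq hπ] using hF (Function.surjInv hπ a) (Function.surjInv hπ b)
  · simpa [Function.surjInv_eq hπ] using hF (Function.surjInv hπ (π x)) x

theorem isCompact_setOf_lipschitzWith_norm_le {X E : Type*} [PseudoMetricSpace X] [CompactSpace X]
    [NormedAddCommGroup E] [ProperSpace E] (K : ℝ≥0) (R : ℝ) :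
    IsCompact {f : C(X, E) | LipschitzWith K f ∧ ∀ x, ‖f x‖ ≤ R} := by
  refine ArzelaAscoli.isCompact_of_equicontinuous _ ?_
    (LipschitzWith.uniformEquicontinuous _ K fun f => f.2.1).equicontinuous
  have himage : ContinuousMap.toFun '' {f : C(X, E) | LipschitzWith K f ∧ ∀ x, ‖f x‖ ≤ R} =
      {g : X → E | LipschitzWith K g} ∩ Set.univ.pi fun _ => Metric.closedBall 0 R := by
    ext g
    constructor
    · rintro ⟨f, hf, rfl⟩
      exact ⟨hf.1, fun x _ => mem_closedBall_zero_iff.2 (hf.2 x)⟩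
    · rintro ⟨hg, hR⟩
      exact ⟨⟨g, hg.continuous⟩, ⟨hg, fun x => mem_closedBall_zero_iff.1 (hR x trivial)⟩, rfl⟩
  rw [himage]
  exact (isCompact_univ_pi fun _ => isCompact_closedBall 0 R).inter_left
    (isClosed_setOfPred_lipschitzWith K)

theorem IsCompact.exists_finset_dist_lt_of_denseRange {Y α : Type*} [PseudoMetricSpace Y]
    {S : Set Y} (hS : IsCompact S) {φ : α → Y} (hφ : DenseRange φ) {ε : ℝ} (hε : 0 < ε) :
    ∃ t : Finset α, ∀ y ∈ S, ∃ a ∈ t, dist y (φ a) < ε := by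
  classical
  obtain ⟨s, -, hs, hcover⟩ := finite_cover_balls_of_compact hS (half_pos hε)
  choose a ha using fun z : Y => hφ.exists_dist_lt z (half_pos hε)
  refine ⟨hs.toFinset.image a, fun y hy => ?_⟩
  obtain ⟨z, hz, hyz⟩ := Set.mem_iUnion₂.1 (hcover hy)
  refine ⟨a z, mem_image_of_mem _ (hs.mem_toFinset.2 hz), ?_⟩
  calc dist y (φ (a z)) ≤ dist y z + dist z (φ (a z)) := dist_triangle _ _ _
    _ < ε / 2 + ε / 2 := add_lt_add (Metric.mem_ball.1 hyz) (ha z)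
    _ = ε := add_halves ε

theorem ContinuousMap.integrable_of_compactSpace {X E : Type*} [TopologicalSpace X]
    [CompactSpace X] [MeasurableSpace X] [OpensMeasurableSpace X] [NormedAddCommGroup E]
    {μ : Measure X} [IsFiniteMeasure μ] (f : C(X, E)) : Integrable f μ :=
  f.continuous.integrable_of_hasCompactSupport (HasCompactSupport.of_compactSpace f)

theorem norm_sub_integral_le {X E : Type*} [MeasurableSpace X] [NormedAddCommGroup E]
    [NormedSpace ℝ E] {μ : Measure X} [IsProbabilityMeasure μ] {f : X → E} {C : ℝ}
    (hf : ∀ x, ‖f x‖ ≤ C) (x : X) : ‖f x - ∫ y, f y ∂μ‖ ≤ 2 * C := by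
  have hint := norm_integral_le_of_norm_le_const (μ := μ) (Filter.Eventually.of_forall hf)
  rw [probReal_univ, mul_one] at hint
  linarith [norm_sub_le (f x) (∫ y, f y ∂μ), hf x]

theorem integral_fourier_of_ne_zero {T : ℝ} [hT : Fact (0 < T)] {n : ℤ} (hn : n ≠ 0) :
    ∫ t : AddCircle T, fourier n t = 0 :=
  integral_eq_zero_of_add_right_eq_neg (fourier_add_half_inv_index hn hT.out)

instance : IsProbabilityMeasure (volume : Measure UnitAddCircle) :=
  ⟨by simp [AddCircle.measure_univ]⟩

namespace UnitAddTorus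

def mk {ι : Type*} (x : ι → ℝ) : UnitAddTorus ι := fun i => (x i : UnitAddCircle)

theorem mk_surjective {ι : Type*} : Function.Surjective (mk (ι := ι)) :=
  Function.Surjective.piMap fun _ => QuotientAddGroup.mk_surjective

variable {ι : Type*} [Fintype ι]

theorem dist_le_half (s t : UnitAddTorus ι) : dist s t ≤ 1 / 2 :=
  (dist_pi_le_iff (by norm_num)).2 fun i => by
    simpa [dist_eq_norm] using AddCircle.norm_le_half_period 1 (x := s i - t i) one_ne_zero

theorem measurePreserving_mk :
    MeasurePreserving (mk (ι := ι)) (volume.restrict (Set.univ.pi fun _ => Set.Ioc 0 1)) volume := by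
  rw [volume_pi, Measure.restrict_pi_pi]
  exact measurePreserving_pi _ _ fun _ => by simpa using AddCircle.measurePreserving_mk 1 0

theorem setIntegral_pi_Icc_comp_mk {E : Type*} [NormedAddCommGroup E] [NormedSpace ℝ E]
    (f : C(UnitAddTorus ι, E)) :
    ∫ x in Set.univ.pi (fun _ => Set.Icc (0 : ℝ) 1), f (mk x) = ∫ t, f t := by
  have hIoc : (Set.univ.pi fun _ : ι => Set.Ioc (0 : ℝ) 1) =ᵐ[volume]
      Set.univ.pi fun _ => Set.Icc 0 1 :=
    Measure.pi_Ioc_ae_eq_pi_Icc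
  rw [← setIntegral_congr_set hIoc, ← measurePreserving_mk.map_eq,
    integral_map measurePreserving_mk.measurable.aemeasurable f.continuous.aestronglyMeasurable]

theorem mFourier_mk (n : ι → ℤ) (x : ι → ℝ) :
    mFourier n (mk x) = exp (2 * Real.pi * I * ∑ i, (n i : ℝ) * x i) := by
  simp only [mFourier, ContinuousMap.coe_mk, mk, fourier_coe_apply, ← exp_sum]
  push_cast
  rw [mul_sum]
  exact congr_arg exp (sum_congr rfl fun i _ => by ring)

theorem integral_mFourier {n : ι → ℤ} (hn : n ≠ 0) : ∫ t : UnitAddTorus ι, mFourier n t = 0 := by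
  obtain ⟨i, hi⟩ := Function.ne_iff.1 hn
  rw [mFourier, ContinuousMap.coe_mk, integral_fintype_prod_volume_eq_prod]
  exact prod_eq_zero (mem_univ i) (integral_fourier_of_ne_zero hi)

theorem integral_linearCombination_mFourier (c : (ι → ℤ) →₀ ℂ) :
    ∫ t, Finsupp.linearCombination ℂ mFourier c t = c 0 := by
  classical
  simp only [Finsupp.linearCombination_apply, Finsupp.sum, ContinuousMap.coe_sum,
    ContinuousMap.coe_smul, Finset.sum_apply, Pi.smul_apply]
  rw [integral_finsetSum (f := fun m t => c m • mFourier m t) _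
    fun m _ => (mFourier m).integrable_of_compactSpace.smul (c m)]
  simp only [integral_smul]
  rw [sum_eq_single 0]
  · simp [mFourier_zero]
  · intro m _ hm
    rw [integral_mFourier hm, smul_zero]
  · intro h
    simp [Finsupp.notMem_support_iff.1 h]

theorem linearCombination_mFourier_apply (c : (ι → ℤ) →₀ ℂ) (t : UnitAddTorus ι) :
    Finsupp.linearCombination ℂ mFourier c t = ∑ᶠ m, c m * mFourier m t := by
  rw [Finsupp.linearCombination_apply, Finsupp.sum, ContinuousMap.coe_sum, Finset.sum_apply,
    finsum_eq_sum_of_support_subset _ fun m hm => ?_]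
  · rfl
  · exact Finsupp.mem_support_iff.2 (left_ne_zero_of_mul hm)

theorem linearCombination_mFourier_single_zero (a : ℂ) :
    Finsupp.linearCombination ℂ (mFourier (d := ι)) (Finsupp.single 0 a) =
      ContinuousMap.const _ a := by
  ext t
  simp [mFourier_zero]

theorem denseRange_linearCombination_mFourier :
    DenseRange (Finsupp.linearCombination ℂ (mFourier (d := ι))) := by
  rw [DenseRange, ← LinearMap.coe_range, Finsupp.range_linearCombination,
    Submodule.dense_iff_topologicalClosure_eq_top]
  exact span_mFourier_closure_eq_top

/-- Only the constant coefficient is left unbounded: it absorbs `f 0`, which is subtracted to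
bring `f` into a fixed compact set. -/
theorem exists_linearCombination_mFourier_approx_of_lipschitzWith (K : ℝ≥0) {ε : ℝ}
    (hε : 0 < ε) :
    ∃ (A : Finset (ι → ℤ)) (B : ℝ), ∀ f : C(UnitAddTorus ι, ℂ), LipschitzWith K f →
      ∃ c : (ι → ℤ) →₀ ℂ, c.support ⊆ A ∧ (∀ m ≠ 0, ‖c m‖ ≤ B) ∧
        dist f (Finsupp.linearCombination ℂ mFourier c) < ε := by
  classical
  obtain ⟨t, ht⟩ := (isCompact_setOf_lipschitzWith_norm_le (X := UnitAddTorus ι) (E := ℂ) K K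
    ).exists_finset_dist_lt_of_denseRange denseRange_linearCombination_mFourier hε
  set B : ℝ≥0 := t.sup fun c => c.support.sup fun m => ‖c m‖₊
  have hB : ∀ c ∈ t, ∀ m, ‖c m‖₊ ≤ B := fun c hc m => by
    by_cases hm : m ∈ c.support
    · exact (le_sup (f := fun m => ‖c m‖₊) hm).trans
        (le_sup (f := fun c : (ι → ℤ) →₀ ℂ => c.support.sup fun m => ‖c m‖₊) hc)
    · simp [Finsupp.notMem_support_iff.1 hm]
  refine ⟨insert 0 (t.biUnion Finsupp.support), B, fun f hf => ?_⟩
  set g := f - ContinuousMap.const _ (f 0)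
  have hg : LipschitzWith K g := .of_dist_le_mul fun x y => by simpa [g] using hf.dist_le_mul x y
  have hgK : ∀ x, ‖g x‖ ≤ K := fun x => by
    simpa [g, dist_eq_norm] using (hf.dist_le_mul x 0).trans
      (mul_le_of_le_one_right K.2 ((dist_le_half x 0).trans (by norm_num)))
  obtain ⟨c, hct, hc⟩ := ht g ⟨hg, hgK⟩
  refine ⟨c + Finsupp.single 0 (f 0), ?_, fun m hm => ?_, ?_⟩
  · refine Finsupp.support_add.trans (union_subset (fun m hm => ?_) ?_)
    · exact mem_insert_of_mem (mem_biUnion.2 ⟨c, hct, hm⟩)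
    · exact Finsupp.support_single_subset.trans (singleton_subset_iff.2 (mem_insert_self _ _))
  · simpa [Finsupp.single_apply, Ne.symm hm] using NNReal.coe_le_coe.2 (hB c hct m)
  · rw [map_add, linearCombination_mFourier_single_zero]
    simpa [g, dist_eq_norm, sub_sub, add_comm] using hc

theorem norm_sub_linearCombination_mFourier_add_single_le (G : C(UnitAddTorus ι, ℂ))
    (c : (ι → ℤ) →₀ ℂ) (t : UnitAddTorus ι) :
    ‖G t - Finsupp.linearCombination ℂ mFourier (c + Finsupp.single 0 ((∫ s, G s) - c 0)) t‖ ≤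
      2 * dist G (Finsupp.linearCombination ℂ mFourier c) := by
  set P := Finsupp.linearCombination ℂ mFourier c
  have hmean : ∫ s, (G - P) s = (∫ s, G s) - c 0 := by
    simp only [ContinuousMap.sub_apply]
    rw [integral_sub G.integrable_of_compactSpace P.integrable_of_compactSpace,
      integral_linearCombination_mFourier]
  rw [map_add, linearCombination_mFourier_single_zero, ContinuousMap.add_apply,
    ContinuousMap.const_apply, dist_eq_norm]
  calc ‖G t - (P t + ((∫ s, G s) - c 0))‖ = ‖(G - P) t - ∫ s, (G - P) s‖ := by
        rw [hmean, ContinuousMap.sub_apply]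
        ring_nf
    _ ≤ 2 * ‖G - P‖ := norm_sub_integral_le (fun s => (G - P).norm_coe_le_norm s) t

end UnitAddTorus

theorem torusDist_nonneg {d : ℕ} (x y : Fin d → ℝ) : 0 ≤ torusDist x y :=
  Real.iInf_nonneg fun _ => Real.sqrt_nonneg _

theorem torusDist_le {d : ℕ} (x y : Fin d → ℝ) (z : Fin d → ℤ) :
    torusDist x y ≤ Real.sqrt (∑ i, (x i - y i - (z i : ℝ)) ^ 2) :=
  ciInf_le ⟨0, by rintro r ⟨w, rfl⟩; exact Real.sqrt_nonneg _⟩ z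

theorem torusDist_le_sqrt_mul_dist {d : ℕ} (x y : Fin d → ℝ) :
    torusDist x y ≤ √d * dist (mk x) (mk y) := by
  set D := dist (mk x) (mk y)
  have hcoord : ∀ i, |x i - y i - round (x i - y i)| ≤ D := fun i => by
    rw [← UnitAddCircle.norm_eq, AddCircle.coe_sub, ← dist_eq_norm]
    exact dist_le_pi_dist (mk x) (mk y) i
  calc torusDist x y ≤ √(∑ i, (x i - y i - (round (x i - y i) : ℤ)) ^ 2) := torusDist_le x y _
    _ ≤ √(d * D ^ 2) := by
      gcongr
      calc _ ≤ ∑ _i : Fin d, D ^ 2 := sum_le_sum fun i _ => by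
              rw [← sq_abs]; exact pow_le_pow_left₀ (abs_nonneg _) (hcoord i) 2
        _ = d * D ^ 2 := by simp
    _ = √d * D := by rw [Real.sqrt_mul (Nat.cast_nonneg d), Real.sqrt_sq dist_nonneg]

theorem exists_lipschitzWith_lift_of_norm_sub_le_torusDist {d : ℕ} {M : ℝ}
    {F : (Fin d → ℝ) → ℂ} (hF : ∀ x y, ‖F x - F y‖ ≤ M * torusDist x y) :
    ∃ G : C(UnitAddTorus (Fin d), ℂ), LipschitzWith (M.toNNReal * NNReal.sqrt d) G ∧
      ∀ x, G (mk x) = F x := by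
  obtain ⟨G, hG, hGF⟩ := mk_surjective.exists_lipschitzWith_comp_eq (F := F)
    (K := M.toNNReal * NNReal.sqrt d) fun x y => by
      calc dist (F x) (F y) ≤ M * torusDist x y := by rw [dist_eq_norm]; exact hF x y
        _ ≤ M.toNNReal * torusDist x y :=
          mul_le_mul_of_nonneg_right M.le_coe_toNNReal (torusDist_nonneg x y)
        _ ≤ M.toNNReal * (√d * dist (mk x) (mk y)) := by
          gcongr; exact torusDist_le_sqrt_mul_dist x y
        _ = ↑(M.toNNReal * NNReal.sqrt d) * dist (mk x) (mk y) := by push_cast; ring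
  exact ⟨⟨G, hG.continuous⟩, hG, fun x => congrFun hGF x⟩

theorem fourier_truncation_general (d : ℕ) (M δ : ℝ) (hδ : 0 < δ) :
    ∃ (M₀ : ℕ) (B : ℝ), ∀ F : (Fin d → ℝ) → ℂ,
      (∀ x y, ‖F x - F y‖ ≤ M * torusDist x y) →
      ∃ c : (Fin d → ℤ) → ℂ,
        c 0 = (∫ x in Set.univ.pi (fun _ : Fin d => Set.Icc (0 : ℝ) 1), F x) ∧
        (∀ m, m ≠ 0 → ‖c m‖ ≤ B) ∧
        (∀ m : Fin d → ℤ, (M₀ : ℝ) < ∑ i, |(m i : ℝ)| → c m = 0) ∧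
        ∀ x, ‖F x - ∑ᶠ m : Fin d → ℤ,
            c m * Complex.exp (2 * Real.pi * Complex.I * ∑ i, (m i : ℝ) * x i)‖ ≤ δ := by
  obtain ⟨A, B, happrox⟩ := exists_linearCombination_mFourier_approx_of_lipschitzWith
    (ι := Fin d) (M.toNNReal * NNReal.sqrt d) (half_pos hδ)
  obtain ⟨M₀, hM₀⟩ : ∃ M₀ : ℕ, ∀ m ∈ A, ∑ i, |(m i : ℝ)| ≤ M₀ := by
    obtain ⟨b, hb⟩ := (A.image fun m : Fin d → ℤ => ∑ i, |(m i : ℝ)|).exists_le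
    obtain ⟨M₀, hbM₀⟩ := exists_nat_ge b
    exact ⟨M₀, fun m hm => (hb _ (mem_image_of_mem _ hm)).trans hbM₀⟩
  refine ⟨M₀, B, fun F hF => ?_⟩
  obtain ⟨G, hG, hGF⟩ := exists_lipschitzWith_lift_of_norm_sub_le_torusDist hF
  obtain ⟨c, hcA, hcB, hGc⟩ := happrox G hG
  have hmean : ∫ x in Set.univ.pi (fun _ : Fin d => Set.Icc (0 : ℝ) 1), F x = ∫ t, G t := by
    simp only [← hGF, setIntegral_pi_Icc_comp_mk]
  refine ⟨⇑(c + Finsupp.single (0 : Fin d → ℤ) ((∫ t, G t) - c 0)), by rw [hmean]; simp,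
    fun m hm => by simpa [hm] using hcB m hm, fun m hm => ?_, fun x => ?_⟩
  · have hm0 : m ≠ 0 := by
      rintro rfl
      simp only [Pi.zero_apply, Int.cast_zero, abs_zero, sum_const_zero] at hm
      exact hm.not_ge M₀.cast_nonneg
    simp [Finsupp.notMem_support_iff.1 fun h => (hM₀ m (hcA h)).not_gt hm, hm0]
  · simp_rw [← mFourier_mk, ← linearCombination_mFourier_apply, ← hGF x]
    exact (norm_sub_linearCombination_mFourier_add_single_le G c (mk x)).trans (by linarith)

/-- Fourier truncation for Lipschitz functions on the torus: every `F : 𝕋^d → ℂ` with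
Lipschitz constant at most `M` (for the quotient metric) is uniformly within `δ` of a
trigonometric polynomial `Σ_{‖m‖₁ ≤ M₀} c_m e(m·x)`, where `M₀` and the bound `B` on
the coefficients `c_m` (for `m ≠ 0`) depend only on `d, M, δ`, and
`c₀ = ∫_{𝕋^d} F dμ`. -/
theorem fourier_truncation (d : ℕ) (M δ : ℝ) (hM : 0 < M) (hδ : 0 < δ) :
    ∃ (M₀ : ℕ) (B : ℝ), ∀ F : (Fin d → ℝ) → ℂ,
      (∀ x y, ‖F x - F y‖ ≤ M * torusDist x y) →
      ∃ c : (Fin d → ℤ) → ℂ,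
        c 0 = (∫ x in Set.univ.pi (fun _ : Fin d => Set.Icc (0 : ℝ) 1), F x) ∧
        (∀ m, m ≠ 0 → ‖c m‖ ≤ B) ∧
        (∀ m : Fin d → ℤ, (M₀ : ℝ) < ∑ i, |(m i : ℝ)| → c m = 0) ∧
        ∀ x, ‖F x - ∑ᶠ m : Fin d → ℤ,
            c m * Complex.exp (2 * Real.pi * Complex.I * ∑ i, (m i : ℝ) * x i)‖ ≤ δ :=
  fourier_truncation_general d M δ hδ
end
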